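/- arXiv:2307.08280 — 9 statements merged into one kernel-verified Lean document; each statement's English description precedes it below -/
import Mathlib

section
/- Let H be a separable Hilbert space, J ∈ B(H) skew-adjoint, R ∈ B(H) self-adjoint nonnegative with dim ker R finite, and suppose every closed subspace V ⊆ ker R that is invariant under J equals {0}. Then for m = dim ker R, the operator ∑_{j=0}^{m} J^j R (J*)^j is positive, i.e., ⟨∑_{j=0}^{m} J^j R (J*)^j x, x⟩ > 0 for all nonzero x ∈ H. -/
/-!
Each summand equals `⟪R ((J†)ʲ x), (J†)ʲ x⟫ ≥ 0`, so if the sum vanishes at `x` then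
`(J†)ʲ x ∈ ker R` for `j ≤ m`, since a positive operator kills every `y` with `⟪R y, y⟫ = 0`.
The Krylov subspaces `span {x, J† x, …, (J†)ⁿ⁻¹ x}` increase with `n`; inside the `m`-dimensional
`ker R` they cannot grow strictly `m + 1` times, so one of them is `J†`-invariant, hence
`J`-invariant as `J† = -J`. It is finite-dimensional, so closed, and contains `x`, forcing `x = 0`.
-/

open ContinuousLinearMap
open scoped InnerProductSpace

section Krylov

variable {K M : Type*} [Field K] [AddCommGroup M] [Module K M] (f : Module.End K M) (x : M)

def krylovSubspace (n : ℕ) : Submodule K M :=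
  Submodule.span K ((fun j => (f ^ j) x) '' Set.Iio n)

instance (n : ℕ) : FiniteDimensional K (krylovSubspace f x n) :=
  FiniteDimensional.span_of_finite K ((Set.finite_Iio n).image _)

variable {f x}

lemma pow_apply_mem_krylovSubspace {j n : ℕ} (h : j < n) : (f ^ j) x ∈ krylovSubspace f x n :=
  Submodule.subset_span ⟨j, h, rfl⟩

lemma krylovSubspace_mono : Monotone (krylovSubspace f x) := fun _ _ h =>
  Submodule.span_mono (Set.image_mono (Set.Iio_subset_Iio h))

lemma apply_mem_krylovSubspace_succ {n : ℕ} {y : M} (hy : y ∈ krylovSubspace f x n) :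
    f y ∈ krylovSubspace f x (n + 1) := by
  induction hy using Submodule.span_induction with
  | mem z hz =>
    obtain ⟨j, hj, rfl⟩ := hz
    rw [← Module.End.mul_apply, ← pow_succ']
    exact pow_apply_mem_krylovSubspace (Nat.succ_lt_succ hj)
  | zero => simp
  | add a b _ _ ha hb => rw [map_add]; exact add_mem ha hb
  | smul c a _ ha => rw [map_smul]; exact Submodule.smul_mem _ c ha

lemma le_finrank_krylovSubspace {N : ℕ}
    (h : ∀ n < N, krylovSubspace f x (n + 1) ≠ krylovSubspace f x n) :
    ∀ n ≤ N, n ≤ Module.finrank K (krylovSubspace f x n) := by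
  intro n
  induction n with
  | zero => simp
  | succ n ih =>
    intro hn
    have hlt : krylovSubspace f x n < krylovSubspace f x (n + 1) :=
      lt_of_le_of_ne (krylovSubspace_mono n.le_succ) (h n hn).symm
    have := Submodule.finrank_lt_finrank_of_lt hlt
    have := ih (by omega)
    omega

lemma exists_krylovSubspace_succ_eq {W : Submodule K M} [FiniteDimensional K W]
    (hW : krylovSubspace f x (Module.finrank K W + 1) ≤ W) :
    ∃ n ≤ Module.finrank K W, krylovSubspace f x (n + 1) = krylovSubspace f x n := by
  by_contra! h
  have h₁ := le_finrank_krylovSubspace (fun n hn => h n (Nat.le_of_lt_succ hn))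
    (Module.finrank K W + 1) le_rfl
  have h₂ := Submodule.finrank_mono hW
  omega

theorem exists_invariant_submodule_of_pow_apply_mem {W : Submodule K M} [FiniteDimensional K W]
    (hx : ∀ j ≤ Module.finrank K W, (f ^ j) x ∈ W) :
    ∃ V : Submodule K M, FiniteDimensional K V ∧ x ∈ V ∧ V ≤ W ∧ ∀ y ∈ V, f y ∈ V := by
  have hW : krylovSubspace f x (Module.finrank K W + 1) ≤ W := by
    refine Submodule.span_le.2 ?_
    rintro _ ⟨j, hj, rfl⟩
    exact hx j (Nat.le_of_lt_succ hj)
  obtain ⟨n, hn, hstab⟩ := exists_krylovSubspace_succ_eq hW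
  refine ⟨krylovSubspace f x n, inferInstance, ?_, (krylovSubspace_mono (by omega)).trans hW,
    fun y hy => hstab ▸ apply_mem_krylovSubspace_succ hy⟩
  simpa [← hstab] using pow_apply_mem_krylovSubspace (f := f) (x := x) n.succ_pos

end Krylov

lemma inner_mul_mul_adjoint_apply {𝕜 E : Type*} [RCLike 𝕜] [NormedAddCommGroup E]
    [InnerProductSpace 𝕜 E] [CompleteSpace E] (A T : E →L[𝕜] E) (x : E) :
    ⟪(A * T * adjoint A) x, x⟫_𝕜 = ⟪T (adjoint A x), adjoint A x⟫_𝕜 :=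
  (adjoint_inner_right A _ x).symm

/-- Writing `R = S† S` turns `⟪R y, y⟫` into `‖S y‖²`. -/
lemma ContinuousLinearMap.IsPositive.apply_eq_zero_of_re_inner_eq_zero {H : Type*}
    [NormedAddCommGroup H] [InnerProductSpace ℂ H] [CompleteSpace H] {R : H →L[ℂ] H}
    (hR : R.IsPositive) {y : H} (h : (⟪R y, y⟫_ℂ).re = 0) : R y = 0 := by
  obtain ⟨S, rfl⟩ := CStarAlgebra.nonneg_iff_eq_star_mul_self.1 ((nonneg_iff_isPositive R).2 hR)
  have hSy : S y = 0 := by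
    change (⟪adjoint S (S y), y⟫_ℂ).re = 0 at h
    rw [adjoint_inner_left, ← RCLike.re_to_complex, inner_self_eq_norm_sq] at h
    simpa using h
  simp [hSy]

theorem sum_pos_of_no_invariant_subspace_general
    {H : Type*} [NormedAddCommGroup H] [InnerProductSpace ℂ H]
    [CompleteSpace H]
    (J R : H →L[ℂ] H)
    (hJ : ContinuousLinearMap.adjoint J = -J)
    (hR : R.IsPositive)
    [FiniteDimensional ℂ (LinearMap.ker (R : H →ₗ[ℂ] H))]
    (hinv : ∀ V : Submodule ℂ H, IsClosed (V : Set H) → V ≤ LinearMap.ker (R : H →ₗ[ℂ] H) →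
      (∀ x ∈ V, J x ∈ V) → V = ⊥) :
    ∀ x : H, x ≠ 0 →
      0 < (⟪(∑ j ∈ Finset.range (Module.finrank ℂ (LinearMap.ker (R : H →ₗ[ℂ] H)) + 1),
          (J ^ j) * R * (ContinuousLinearMap.adjoint J) ^ j) x, x⟫_ℂ).re := by
  intro x hx
  have hterm (j : ℕ) : ⟪(J ^ j * R * adjoint J ^ j) x, x⟫_ℂ
      = ⟪R ((adjoint J ^ j) x), (adjoint J ^ j) x⟫_ℂ := by
    rw [← star_eq_adjoint, ← star_pow, star_eq_adjoint, inner_mul_mul_adjoint_apply]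
  simp only [sum_apply, sum_inner, Complex.re_sum, hterm]
  refine (Finset.sum_nonneg fun j _ => hR.re_inner_nonneg_left _).lt_of_ne fun hzero => hx ?_
  have hker : ∀ j ≤ Module.finrank ℂ (LinearMap.ker (R : H →ₗ[ℂ] H)),
      ((adjoint J : Module.End ℂ H) ^ j) x ∈ LinearMap.ker (R : H →ₗ[ℂ] H) := fun j hj => by
    rw [← toLinearMap_pow, LinearMap.mem_ker]
    exact hR.apply_eq_zero_of_re_inner_eq_zero <| (Finset.sum_eq_zero_iff_of_nonneg
      fun i _ => hR.re_inner_nonneg_left _).1 hzero.symm j (Finset.mem_range_succ_iff.2 hj)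
  obtain ⟨V, hVfin, hxV, hVker, hVinv⟩ := exists_invariant_submodule_of_pow_apply_mem hker
  have hJV (y : H) (hy : y ∈ V) : J y ∈ V := by
    simpa [hJ] using V.neg_mem (hVinv y hy)
  simpa [hinv V V.closed_of_finiteDimensional hVker hJV] using hxV

/-- if every closed `J`-invariant subspace of `ker R` is trivial, then with
`m = dim ker R` the operator `∑_{j=0}^m J^j R (J*)^j` is positive. -/
theorem sum_pos_of_no_invariant_subspace
    {H : Type*} [NormedAddCommGroup H] [InnerProductSpace ℂ H]
    [CompleteSpace H] [TopologicalSpace.SeparableSpace H]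
    (J R : H →L[ℂ] H)
    (hJ : ContinuousLinearMap.adjoint J = -J)
    (hR : R.IsPositive)
    [FiniteDimensional ℂ (LinearMap.ker (R : H →ₗ[ℂ] H))]
    (hinv : ∀ V : Submodule ℂ H, IsClosed (V : Set H) → V ≤ LinearMap.ker (R : H →ₗ[ℂ] H) →
      (∀ x ∈ V, J x ∈ V) → V = ⊥) :
    ∀ x : H, x ≠ 0 →
      0 < (⟪(∑ j ∈ Finset.range (Module.finrank ℂ (LinearMap.ker (R : H →ₗ[ℂ] H)) + 1),
          (J ^ j) * R * (ContinuousLinearMap.adjoint J) ^ j) x, x⟫_ℂ).re :=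
  sum_pos_of_no_invariant_subspace_general J R hJ hR hinv
end

section
/- Let H be a Hilbert space, J ∈ B(H) skew-adjoint, R ∈ B(H) self-adjoint nonnegative, and m ∈ ℕ. Then there exists κ > 0 such that ∑_{j=0}^{m} J^j R (J*)^j ≥ κ·I if and only if the (algebraic, not necessarily closed) span of the union over j = 0,…,m of the ranges of J^j ∘ √R equals H. -/
/-!
Put `A j = J ^ j ∘ √R` and let `B : ℓ²(Fin (m + 1); H) → H` be `v ↦ ∑ j, A j (v j)`. Its range is
the span of the ranges of the `A j`, and `∑ j, J ^ j R (J*) ^ j = B B*`, so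
`⟪B B* x, x⟫ = ‖B* x‖²`. The theorem is therefore the Hilbert space fact that `B` is onto iff `B*`
is bounded below. If `B` is onto, the open mapping theorem gives preimages `B v = y` with
`‖v‖ ≤ C ‖y‖`, and then `‖y‖² = re ⟪v, B* y⟫ ≤ C ‖y‖ ‖B* y‖`. Conversely, if `B*` is bounded
below then `B B*` is coercive, hence invertible, so `B` is onto.
-/

open ContinuousLinearMap
open scoped InnerProductSpace InnerProduct

namespace ContinuousLinearMap

open RCLike

variable {𝕜 E F : Type*} [RCLike 𝕜]
  [NormedAddCommGroup E] [InnerProductSpace 𝕜 E] [NormedAddCommGroup F] [InnerProductSpace 𝕜 F]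
  {ι : Type*} [Fintype ι] {G : ι → Type*} [∀ i, NormedAddCommGroup (G i)]
  [∀ i, InnerProductSpace 𝕜 (G i)]

noncomputable def piLpCoprod (A : ∀ i, G i →L[𝕜] F) : PiLp 2 G →L[𝕜] F :=
  ∑ i, A i ∘L PiLp.proj 2 G i

@[simp]
theorem piLpCoprod_apply (A : ∀ i, G i →L[𝕜] F) (v : PiLp 2 G) :
    piLpCoprod A v = ∑ i, A i (v i) := by
  simp [piLpCoprod]

theorem range_piLpCoprod (A : ∀ i, G i →L[𝕜] F) :
    (piLpCoprod A).range = Submodule.span 𝕜 (⋃ i, Set.range (A i)) := by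
  classical
  apply le_antisymm
  · rintro _ ⟨v, rfl⟩
    rw [coe_coe, piLpCoprod_apply]
    exact Submodule.sum_mem _ fun i _ =>
      Submodule.subset_span (Set.mem_iUnion_of_mem i (Set.mem_range_self _))
  · rw [Submodule.span_le, Set.iUnion_subset_iff]
    rintro i _ ⟨w, rfl⟩
    refine ⟨PiLp.single 2 i w, ?_⟩
    rw [coe_coe, piLpCoprod_apply, Finset.sum_eq_single i (fun j _ hj => by simp [hj]) (by simp)]
    simp

variable [CompleteSpace E] [CompleteSpace F] [∀ i, CompleteSpace (G i)]

theorem adjoint_pow (J : E →L[𝕜] E) (j : ℕ) : (J ^ j)† = (J†) ^ j := by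
  rw [← star_eq_adjoint, ← star_eq_adjoint, star_pow]

theorem re_inner_comp_adjoint_apply_self (B : E →L[𝕜] F) (y : F) :
    re ⟪(B ∘L B†) y, y⟫_𝕜 = ‖(B†) y‖ ^ 2 := by
  simpa using (apply_norm_sq_eq_inner_adjoint_left (B†) y).symm

theorem norm_le_mul_norm_adjoint_apply {B : E →L[𝕜] F} {C : ℝ}
    (hB : ∀ y, ∃ x, B x = y ∧ ‖x‖ ≤ C * ‖y‖) (y : F) : ‖y‖ ≤ C * ‖(B†) y‖ := by
  obtain ⟨x, rfl, hx⟩ := hB y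
  have key : ‖B x‖ * ‖B x‖ ≤ ‖B x‖ * (C * ‖(B†) (B x)‖) := calc
    ‖B x‖ * ‖B x‖ = re ⟪x, (B†) (B x)⟫_𝕜 := by
      rw [adjoint_inner_right, inner_self_eq_norm_mul_norm]
    _ ≤ ‖x‖ * ‖(B†) (B x)‖ := (re_le_norm _).trans (norm_inner_le_norm _ _)
    _ ≤ C * ‖B x‖ * ‖(B†) (B x)‖ := by gcongr
    _ = ‖B x‖ * (C * ‖(B†) (B x)‖) := by ring
  rcases (norm_nonneg (B x)).eq_or_lt with h0 | h0
  · simp [norm_eq_zero.mp h0.symm]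
  · exact le_of_mul_le_mul_left key h0

theorem surjective_iff_exists_le_norm_adjoint_apply_sq (B : E →L[𝕜] F) :
    Function.Surjective B ↔ ∃ κ : ℝ, 0 < κ ∧ ∀ y, κ * ‖y‖ ^ 2 ≤ ‖(B†) y‖ ^ 2 := by
  constructor
  · intro hB
    obtain ⟨C, hC, hpre⟩ := B.exists_preimage_norm_le hB
    refine ⟨(C ^ 2)⁻¹, by positivity, fun y => ?_⟩
    rw [inv_mul_le_iff₀ (by positivity), ← mul_pow]
    gcongr
    exact norm_le_mul_norm_adjoint_apply hpre y
  · rintro ⟨κ, hκ, hcoer⟩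
    have hunit : IsUnit (B ∘L B†) := by
      refine isUnit_of_forall_le_norm_inner_map _ (c := κ.toNNReal) (by simpa using hκ)
        fun y => ?_
      rw [Real.coe_toNNReal _ hκ.le, mul_comm]
      calc κ * ‖y‖ ^ 2 ≤ re ⟪(B ∘L B†) y, y⟫_𝕜 := by
            rw [re_inner_comp_adjoint_apply_self]; exact hcoer y
        _ ≤ ‖⟪(B ∘L B†) y, y⟫_𝕜‖ := re_le_norm _
    exact Function.Surjective.of_comp (g := B†) (isUnit_iff_bijective.mp hunit).surjective

theorem adjoint_piLpCoprod_apply (A : ∀ i, G i →L[𝕜] F) (y : F) :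
    ((piLpCoprod A)†) y = WithLp.toLp 2 (fun i => ((A i)†) y) := by
  refine ext_inner_left 𝕜 fun v => ?_
  simp [adjoint_inner_right, PiLp.inner_apply, sum_inner]

theorem span_iUnion_range_eq_top_iff (A : ∀ i, G i →L[𝕜] F) :
    Submodule.span 𝕜 (⋃ i, Set.range (A i)) = ⊤ ↔
      ∃ κ : ℝ, 0 < κ ∧ ∀ y, κ * ‖y‖ ^ 2 ≤ ∑ i, ‖((A i)†) y‖ ^ 2 := by
  rw [← range_piLpCoprod, LinearMap.range_eq_top, coe_coe,
    surjective_iff_exists_le_norm_adjoint_apply_sq]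
  simp only [adjoint_piLpCoprod_apply, PiLp.norm_sq_eq_of_L2]

end ContinuousLinearMap

theorem coercive_iff_span_ranges_eq_top_general
    {H : Type*} [NormedAddCommGroup H] [InnerProductSpace ℂ H]
    [CompleteSpace H]
    (J R S : H →L[ℂ] H)
    (hS : S.IsPositive) (hS2 : S * S = R)
    (m : ℕ) :
    (∃ κ : ℝ, 0 < κ ∧ ∀ x : H,
        κ * ‖x‖ ^ 2 ≤ (⟪(∑ j ∈ Finset.range (m + 1),
          (J ^ j) * R * (ContinuousLinearMap.adjoint J) ^ j) x, x⟫_ℂ).re) ↔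
    Submodule.span ℂ (⋃ j ∈ Finset.range (m + 1),
        Set.range ⇑((J ^ j) ∘L S)) = ⊤ := by
  have hterm (j : ℕ) : J ^ j * R * (J†) ^ j = ((J ^ j) ∘L S) ∘L ((J ^ j) ∘L S)† := by
    rw [adjoint_comp, hS.isSelfAdjoint.adjoint_eq, adjoint_pow, ← hS2]
    rfl
  have hquad (x : H) : (⟪(∑ j ∈ Finset.range (m + 1), J ^ j * R * (J†) ^ j) x, x⟫_ℂ).re =
      ∑ j : Finset.range (m + 1), ‖(((J ^ (j : ℕ)) ∘L S)†) x‖ ^ 2 := by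
    rw [sum_apply, sum_inner, Complex.re_sum, ← Finset.sum_coe_sort]
    exact Finset.sum_congr rfl fun j _ => by
      rw [hterm]; exact re_inner_comp_adjoint_apply_self ((J ^ (j : ℕ)) ∘L S) x
  rw [← Set.iUnion_subtype (· ∈ Finset.range (m + 1)) fun j => Set.range ⇑((J ^ (j : ℕ)) ∘L S),
    span_iUnion_range_eq_top_iff]
  simp only [hquad]

/-- `∑_{j=0}^m J^j R (J*)^j ≥ κ I` for some `κ > 0` iff the algebraic span of the
ranges of `J^j ∘ √R`, `j = 0, …, m`, is all of `H`. -/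
theorem coercive_iff_span_ranges_eq_top
    {H : Type*} [NormedAddCommGroup H] [InnerProductSpace ℂ H]
    [CompleteSpace H] [TopologicalSpace.SeparableSpace H]
    (J R S : H →L[ℂ] H)
    (hJ : ContinuousLinearMap.adjoint J = -J)
    (hR : R.IsPositive)
    (hS : S.IsPositive) (hS2 : S * S = R)
    (m : ℕ) :
    (∃ κ : ℝ, 0 < κ ∧ ∀ x : H,
        κ * ‖x‖ ^ 2 ≤ (⟪(∑ j ∈ Finset.range (m + 1),
          (J ^ j) * R * (ContinuousLinearMap.adjoint J) ^ j) x, x⟫_ℂ).re) ↔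
    Submodule.span ℂ (⋃ j ∈ Finset.range (m + 1),
        Set.range ⇑((J ^ j) ∘L S)) = ⊤ :=
  coercive_iff_span_ranges_eq_top_general J R S hS hS2 m
end

section
/- Let H be a Hilbert space, C = R − J ∈ B(H) with R self-adjoint nonnegative and J skew-adjoint, and m ∈ ℕ. Then there exists κ₁ > 0 with ∑_{j=0}^{m} J^j R (J*)^j ≥ κ₁ I if and only if there exists κ₃ > 0 with ∑_{j=0}^{m} (C*)^j R C^j ≥ κ₃ I. -/
/-!
Put `D = J* = -J`. Then `C = D + R` and `J^j R (J*)^j = (D*)^j R D^j`, so both sides say that an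
observability form `x ↦ ∑_{j ≤ m} ⟪R X^j x, X^j x⟫` is coercive, for `X = D` and for `X = C`.
These two forms are comparable: since `R² ≤ ‖R‖ R`, every term `⟪R A R y, A R y⟫` is bounded by
`‖R‖² ‖A‖² ⟪R y, y⟫`, and an induction on `m` through `C x = D x + R x` (and `D x = C x - R x`)
bounds each form by a multiple of the other.
-/

open ContinuousLinearMap
open scoped InnerProductSpace

open Finset RCLike

namespace ContinuousLinearMap

variable {𝕜 E : Type*} [RCLike 𝕜] [NormedAddCommGroup E] [InnerProductSpace 𝕜 E]

lemma reApplyInnerSelf_neg (T : E →L[𝕜] E) (x : E) :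
    T.reApplyInnerSelf (-x) = T.reApplyInnerSelf x := by
  simp [reApplyInnerSelf_apply]

lemma reApplyInnerSelf_add_add_reApplyInnerSelf_sub (T : E →L[𝕜] E) (u v : E) :
    T.reApplyInnerSelf (u + v) + T.reApplyInnerSelf (u - v) =
      2 * T.reApplyInnerSelf u + 2 * T.reApplyInnerSelf v := by
  simp only [reApplyInnerSelf_apply, map_add, map_sub, inner_add_left, inner_add_right,
    inner_sub_left, inner_sub_right]
  ring

lemma reApplyInnerSelf_le (T : E →L[𝕜] E) (x : E) :
    T.reApplyInnerSelf x ≤ ‖T‖ * ‖x‖ ^ 2 :=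
  calc T.reApplyInnerSelf x ≤ ‖T x‖ * ‖x‖ := re_inner_le_norm _ _
    _ ≤ ‖T‖ * ‖x‖ * ‖x‖ := by gcongr; exact T.le_opNorm x
    _ = ‖T‖ * ‖x‖ ^ 2 := by ring

variable {R : E →L[𝕜] E}

lemma IsPositive.reApplyInnerSelf_add_le (hR : R.IsPositive) (u v : E) :
    R.reApplyInnerSelf (u + v) ≤ 2 * R.reApplyInnerSelf u + 2 * R.reApplyInnerSelf v := by
  linarith [R.reApplyInnerSelf_add_add_reApplyInnerSelf_sub u v, hR.2 (u - v)]

lemma IsPositive.norm_apply_sq_le (hR : R.IsPositive) (y : E) :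
    ‖R y‖ ^ 2 ≤ ‖R‖ * R.reApplyInnerSelf y := by
  rcases (norm_nonneg R).eq_or_lt with hR0 | hR0
  · simp [norm_eq_zero.1 hR0.symm]
  -- `0 ≤ ⟪R (t y - R y), t y - R y⟫` at `t = ‖R‖`, with `⟪R (R y), R y⟫ ≤ ‖R‖ ‖R y‖²`
  have hexpand : R.reApplyInnerSelf ((‖R‖ : 𝕜) • y - R y) =
      ‖R‖ ^ 2 * R.reApplyInnerSelf y - 2 * ‖R‖ * ‖R y‖ ^ 2 + R.reApplyInnerSelf (R y) := by
    have hsymm : ⟪R (R y), y⟫_𝕜 = ⟪R y, R y⟫_𝕜 := hR.inner_left_eq_inner_right _ _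
    simp only [reApplyInnerSelf_apply, map_sub, map_smul, inner_sub_left, inner_sub_right,
      inner_smul_left, inner_smul_right, hsymm, inner_self_eq_norm_sq_to_K, conj_ofReal]
    simp only [map_sub, re_ofReal_mul, ← ofReal_pow, ofReal_re]
    ring
  nlinarith [hR.2 ((‖R‖ : 𝕜) • y - R y), R.reApplyInnerSelf_le (R y)]

lemma IsPositive.reApplyInnerSelf_apply_apply_le (hR : R.IsPositive) (A : E →L[𝕜] E) (y : E) :
    R.reApplyInnerSelf (A (R y)) ≤ ‖R‖ ^ 2 * ‖A‖ ^ 2 * R.reApplyInnerSelf y :=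
  calc R.reApplyInnerSelf (A (R y)) ≤ ‖R‖ * ‖A (R y)‖ ^ 2 := R.reApplyInnerSelf_le _
    _ ≤ ‖R‖ * (‖A‖ * ‖R y‖) ^ 2 := by gcongr; exact A.le_opNorm _
    _ = ‖R‖ * ‖A‖ ^ 2 * ‖R y‖ ^ 2 := by ring
    _ ≤ ‖R‖ * ‖A‖ ^ 2 * (‖R‖ * R.reApplyInnerSelf y) := by gcongr; exact hR.norm_apply_sq_le y
    _ = ‖R‖ ^ 2 * ‖A‖ ^ 2 * R.reApplyInnerSelf y := by ring

end ContinuousLinearMap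

section Observability

variable {𝕜 E : Type*} [RCLike 𝕜] [NormedAddCommGroup E] [InnerProductSpace 𝕜 E]

/-- `∑_{j ≤ n} ‖R^{1/2} X^j x‖²`, the quadratic form of `∑_{j ≤ n} (X*)^j R X^j`. -/
noncomputable def observabilityForm (R X : E →L[𝕜] E) (n : ℕ) (x : E) : ℝ :=
  ∑ j ∈ range (n + 1), R.reApplyInnerSelf ((X ^ j) x)

lemma observabilityForm_succ (R X : E →L[𝕜] E) (n : ℕ) (x : E) :
    observabilityForm R X (n + 1) x = R.reApplyInnerSelf x + observabilityForm R X n (X x) := by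
  rw [observabilityForm, sum_range_succ', add_comm]
  rfl

lemma observabilityForm_neg (R X : E →L[𝕜] E) (n : ℕ) (x : E) :
    observabilityForm R X n (-x) = observabilityForm R X n x := by
  simp only [observabilityForm, map_neg, reApplyInnerSelf_neg]

variable {R : E →L[𝕜] E}

lemma observabilityForm_nonneg (hR : R.IsPositive) (X : E →L[𝕜] E) (n : ℕ) (x : E) :
    0 ≤ observabilityForm R X n x :=
  sum_nonneg fun _ _ => hR.2 _

lemma observabilityForm_add_le (hR : R.IsPositive) (X : E →L[𝕜] E) (n : ℕ) (u v : E) :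
    observabilityForm R X n (u + v) ≤
      2 * observabilityForm R X n u + 2 * observabilityForm R X n v := by
  simp only [observabilityForm, mul_sum, ← sum_add_distrib, map_add]
  exact sum_le_sum fun _ _ => hR.reApplyInnerSelf_add_le _ _

lemma observabilityForm_apply_le (hR : R.IsPositive) (X : E →L[𝕜] E) (n : ℕ) (y : E) :
    observabilityForm R X n (R y) ≤
      (∑ j ∈ range (n + 1), ‖R‖ ^ 2 * ‖X ^ j‖ ^ 2) * R.reApplyInnerSelf y := by
  rw [observabilityForm, sum_mul]
  exact sum_le_sum fun j _ => hR.reApplyInnerSelf_apply_apply_le (X ^ j) y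

lemma exists_observabilityForm_le_mul (hR : R.IsPositive) {C D : E →L[𝕜] E}
    (hCD : C - D = R ∨ D - C = R) (n : ℕ) :
    ∃ K, 0 < K ∧ ∀ x, observabilityForm R C n x ≤ K * observabilityForm R D n x := by
  have hdiff (k : ℕ) (x : E) :
      observabilityForm R C k ((C - D) x) = observabilityForm R C k (R x) := by
    rcases hCD with h | h
    · rw [h]
    · rw [← h, ← neg_sub, neg_apply, observabilityForm_neg]
  induction n with
  | zero => exact ⟨1, one_pos, fun x => by simp [observabilityForm]⟩
  | succ n ih =>
    obtain ⟨K, hK, hCD_le⟩ := ih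
    set B := ∑ j ∈ range (n + 1), ‖R‖ ^ 2 * ‖C ^ j‖ ^ 2
    have hB : 0 ≤ B := sum_nonneg fun _ _ => by positivity
    refine ⟨1 + 2 * B + 2 * K, by positivity, fun x => ?_⟩
    have hsplit : C x = D x + (C - D) x := by simp
    have hDx := observabilityForm_nonneg hR D n (D x)
    have hx := hR.2 x
    calc observabilityForm R C (n + 1) x
        = R.reApplyInnerSelf x + observabilityForm R C n (D x + (C - D) x) := by
          rw [observabilityForm_succ, ← hsplit]
      _ ≤ R.reApplyInnerSelf x + 2 * observabilityForm R C n (D x) +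
            2 * observabilityForm R C n (R x) := by
          linarith [observabilityForm_add_le hR C n (D x) ((C - D) x), hdiff n x]
      _ ≤ R.reApplyInnerSelf x + 2 * (K * observabilityForm R D n (D x)) +
            2 * (B * R.reApplyInnerSelf x) := by
          gcongr
          exacts [hCD_le (D x), observabilityForm_apply_le hR C n x]
      _ ≤ (1 + 2 * B + 2 * K) * observabilityForm R D (n + 1) x := by
          rw [observabilityForm_succ]
          nlinarith

lemma exists_coercive_observabilityForm_of_sub (hR : R.IsPositive) {C D : E →L[𝕜] E}
    (hCD : C - D = R ∨ D - C = R) (n : ℕ)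
    (hD : ∃ κ, 0 < κ ∧ ∀ x, κ * ‖x‖ ^ 2 ≤ observabilityForm R D n x) :
    ∃ κ, 0 < κ ∧ ∀ x, κ * ‖x‖ ^ 2 ≤ observabilityForm R C n x := by
  obtain ⟨κ, hκ, hκD⟩ := hD
  obtain ⟨K, hK, hDC⟩ := exists_observabilityForm_le_mul hR hCD.symm n
  refine ⟨κ / K, by positivity, fun x => ?_⟩
  rw [div_mul_eq_mul_div, div_le_iff₀' hK]
  exact (hκD x).trans (hDC x)

lemma re_inner_sum_adjoint_pow_mul_mul_pow_apply [CompleteSpace E] (R X : E →L[𝕜] E)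
    (n : ℕ) (x : E) :
    re ⟪(∑ j ∈ range (n + 1), adjoint X ^ j * R * X ^ j) x, x⟫_𝕜 = observabilityForm R X n x := by
  rw [observabilityForm, _root_.sum_apply, sum_inner, map_sum]
  refine sum_congr rfl fun j _ => ?_
  rw [mul_apply_eq_comp, mul_apply_eq_comp, ← star_eq_adjoint, ← star_pow, star_eq_adjoint,
    adjoint_inner_left]
  rfl

end Observability

theorem coercive_J_sum_iff_coercive_Cstar_sum_general
    {H : Type*} [NormedAddCommGroup H] [InnerProductSpace ℂ H]
    [CompleteSpace H]
    (J R C : H →L[ℂ] H)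
    (hJ : ContinuousLinearMap.adjoint J = -J)
    (hR : R.IsPositive)
    (hC : C = R - J)
    (m : ℕ) :
    (∃ κ₁ : ℝ, 0 < κ₁ ∧ ∀ x : H,
        κ₁ * ‖x‖ ^ 2 ≤ (⟪(∑ j ∈ Finset.range (m + 1),
          (J ^ j) * R * (ContinuousLinearMap.adjoint J) ^ j) x, x⟫_ℂ).re) ↔
    (∃ κ₃ : ℝ, 0 < κ₃ ∧ ∀ x : H,
        κ₃ * ‖x‖ ^ 2 ≤ (⟪(∑ j ∈ Finset.range (m + 1),
          ((ContinuousLinearMap.adjoint C) ^ j) * R * C ^ j) x, x⟫_ℂ).re) := by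
  have hJsum := re_inner_sum_adjoint_pow_mul_mul_pow_apply R (adjoint J) m
  rw [adjoint_adjoint] at hJsum
  have hCJ : C - adjoint J = R := by rw [hC, hJ]; abel
  simp only [← RCLike.re_eq_complex_re, hJsum, re_inner_sum_adjoint_pow_mul_mul_pow_apply]
  exact ⟨exists_coercive_observabilityForm_of_sub hR (.inl hCJ) m,
    exists_coercive_observabilityForm_of_sub hR (.inr hCJ) m⟩

/-- for `C = R − J`, coercivity of `∑_{j=0}^m J^j R (J*)^j` is equivalent to
coercivity of `∑_{j=0}^m (C*)^j R C^j`. -/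
theorem coercive_J_sum_iff_coercive_Cstar_sum
    {H : Type*} [NormedAddCommGroup H] [InnerProductSpace ℂ H]
    [CompleteSpace H] [TopologicalSpace.SeparableSpace H]
    (J R C : H →L[ℂ] H)
    (hJ : ContinuousLinearMap.adjoint J = -J)
    (hR : R.IsPositive)
    (hC : C = R - J)
    (m : ℕ) :
    (∃ κ₁ : ℝ, 0 < κ₁ ∧ ∀ x : H,
        κ₁ * ‖x‖ ^ 2 ≤ (⟪(∑ j ∈ Finset.range (m + 1),
          (J ^ j) * R * (ContinuousLinearMap.adjoint J) ^ j) x, x⟫_ℂ).re) ↔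
    (∃ κ₃ : ℝ, 0 < κ₃ ∧ ∀ x : H,
        κ₃ * ‖x‖ ^ 2 ≤ (⟪(∑ j ∈ Finset.range (m + 1),
          ((ContinuousLinearMap.adjoint C) ^ j) * R * C ^ j) x, x⟫_ℂ).re) :=
  coercive_J_sum_iff_coercive_Cstar_sum_general J R C hJ hR hC m
end

section
/- Let H be a Hilbert space, J ∈ B(H) skew-adjoint, R ∈ B(H) self-adjoint nonnegative. Define C₀ = √R and iterated commutators C_{j+1} = J C_j − C_j J. Then for every k ∈ ℕ, the range of C_k is contained in the span of the union over j = 0,…,k of the ranges of J^j ∘ √R, and conversely the range of J^k ∘ √R is contained in the span of the union over j = 0,…,k of the ranges of C_j. -/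
/-!
Both spans equal the Krylov subspace `range S + J (range S) + ⋯ + J^k (range S)`, characterised by
`V₀ = range S`, `V_{k+1} = V_k + J V_k`. For the powers this is immediate. For the commutators,
`C_{j+1} = J C_j - C_j J` and `J C_j = C_{j+1} + C_j J` show that the spans `W_k` of the ranges of
`C_0, …, C_k` satisfy `W_{k+1} = W_k + J W_k` as well.
-/

open ContinuousLinearMap

theorem Finset.biSup_range_add_one {α : Type*} [CompleteLattice α] (f : ℕ → α) (k : ℕ) :
    ⨆ j ∈ Finset.range (k + 2), f j = (⨆ j ∈ Finset.range (k + 1), f j) ⊔ f (k + 1) := by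
  rw [Finset.range_add_one (n := k + 1), Finset.iSup_insert, sup_comm]

theorem LinearMap.range_sub_le {R M N : Type*} [Ring R] [AddCommGroup M] [AddCommGroup N]
    [Module R M] [Module R N] (f g : M →ₗ[R] N) :
    LinearMap.range (f - g) ≤ LinearMap.range f ⊔ LinearMap.range g := by
  simpa only [sub_eq_add_neg, LinearMap.range_neg] using LinearMap.range_add_le f (-g)

theorem LinearMap.span_iUnion₂_range {R M N ι : Type*} [Semiring R] [AddCommMonoid M]
    [AddCommMonoid N] [Module R M] [Module R N] (f : ι → M →ₗ[R] N) (s : Finset ι) :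
    Submodule.span R (⋃ j ∈ s, Set.range (f j)) = ⨆ j ∈ s, LinearMap.range (f j) := by
  simp only [Submodule.span_iUnion₂, ← LinearMap.coe_range, Submodule.span_eq]

namespace Module.End

variable {R M : Type*} [Ring R] [AddCommGroup M] [Module R M]

def krylovSubspace (J : Module.End R M) (V : Submodule R M) (k : ℕ) : Submodule R M :=
  ⨆ j ∈ Finset.range (k + 1), V.map (J ^ j)

variable {J : Module.End R M} {V : Submodule R M}

theorem krylovSubspace_zero : krylovSubspace J V 0 = V := by
  simp [krylovSubspace, one_eq_id]

theorem krylovSubspace_succ (k : ℕ) :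
    krylovSubspace J V (k + 1) = krylovSubspace J V k ⊔ (krylovSubspace J V k).map J := by
  apply le_antisymm
  · refine iSup₂_le fun j hj => ?_
    rcases j with _ | j
    · exact le_sup_of_le_left (le_iSup₂_of_le 0 (by simp) le_rfl)
    · refine le_sup_of_le_right ?_
      rw [pow_succ', mul_eq_comp, Submodule.map_comp]
      exact Submodule.map_mono
        (le_iSup₂_of_le j (Finset.mem_range.2 (Nat.lt_of_succ_lt_succ (Finset.mem_range.1 hj))) le_rfl)
  · refine sup_le (biSup_mono fun j hj => ?_) ?_
    · simp only [Finset.mem_range] at hj ⊢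
      omega
    · simp only [krylovSubspace, Submodule.map_iSup]
      refine iSup₂_le fun j hj => le_iSup₂_of_le (j + 1) ?_ ?_
      · simpa using hj
      · rw [pow_succ', mul_eq_comp, Submodule.map_comp]

theorem eq_krylovSubspace_of_succ {W : ℕ → Submodule R M}
    (h0 : W 0 = V) (hsucc : ∀ k, W (k + 1) = W k ⊔ (W k).map J) (k : ℕ) :
    W k = krylovSubspace J V k := by
  induction k with
  | zero => rw [h0, krylovSubspace_zero]
  | succ k ih => rw [hsucc, ih, krylovSubspace_succ]

theorem biSup_range_pow_mul_eq_krylovSubspace (S : Module.End R M) (k : ℕ) :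
    ⨆ j ∈ Finset.range (k + 1), LinearMap.range (J ^ j * S) =
      krylovSubspace J (LinearMap.range S) k := by
  simp only [krylovSubspace, mul_eq_comp, LinearMap.range_comp]

theorem biSup_range_commutator_eq_krylovSubspace {C : ℕ → Module.End R M}
    (hC : ∀ j, C (j + 1) = J * C j - C j * J) (k : ℕ) :
    ⨆ j ∈ Finset.range (k + 1), LinearMap.range (C j) =
      krylovSubspace J (LinearMap.range (C 0)) k := by
  set W : ℕ → Submodule R M := fun k => ⨆ j ∈ Finset.range (k + 1), LinearMap.range (C j)
  have range_le {j k : ℕ} (hjk : j ≤ k) : LinearMap.range (C j) ≤ W k :=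
    le_iSup₂_of_le j (Finset.mem_range.2 (Nat.lt_succ_of_le hjk)) le_rfl
  refine eq_krylovSubspace_of_succ (W := W) (by simp [W]) (fun k => le_antisymm ?_ ?_) k
  · rw [show W (k + 1) = W k ⊔ LinearMap.range (C (k + 1)) from Finset.biSup_range_add_one _ k]
    refine sup_le le_sup_left ?_
    calc LinearMap.range (C (k + 1)) ≤ LinearMap.range (C k) ⊔ LinearMap.range (J * C k) := by
          rw [hC, sup_comm]
          exact (LinearMap.range_sub_le _ _).trans
            (sup_le_sup_left (LinearMap.range_comp_le_range _ _) _)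
      _ ≤ W k ⊔ (W k).map J := by
          rw [mul_eq_comp, LinearMap.range_comp]
          exact sup_le_sup (range_le le_rfl) (Submodule.map_mono (range_le le_rfl))
  · refine sup_le (iSup₂_le fun j hj => range_le ?_) ?_
    · simp only [Finset.mem_range] at hj
      omega
    · simp only [W, Submodule.map_iSup]
      refine iSup₂_le fun j hj => ?_
      have hjk : j ≤ k := Nat.le_of_lt_succ (Finset.mem_range.1 hj)
      calc (LinearMap.range (C j)).map J = LinearMap.range (C (j + 1) + C j * J) := by
            rw [hC, sub_add_cancel, mul_eq_comp, LinearMap.range_comp]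
        _ ≤ LinearMap.range (C (j + 1)) ⊔ LinearMap.range (C j) :=
            (LinearMap.range_add_le _ _).trans
              (sup_le_sup_left (LinearMap.range_comp_le_range _ _) _)
        _ ≤ W (k + 1) := sup_le (range_le (by omega)) (range_le (by omega))

end Module.End

theorem range_commutator_subset_span_and_conversely_general
    {H : Type*} [NormedAddCommGroup H] [InnerProductSpace ℂ H]
    (J S : H →L[ℂ] H)
    (Cseq : ℕ → (H →L[ℂ] H))
    (hC0 : Cseq 0 = S)
    (hCsucc : ∀ j : ℕ, Cseq (j + 1) = J * Cseq j - Cseq j * J) :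
    ∀ k : ℕ,
      (LinearMap.range (Cseq k : H →ₗ[ℂ] H) ≤
        Submodule.span ℂ (⋃ j ∈ Finset.range (k + 1), Set.range ⇑((J ^ j) ∘L S))) ∧
      (LinearMap.range ((J ^ k) ∘L S : H →ₗ[ℂ] H) ≤
        Submodule.span ℂ (⋃ j ∈ Finset.range (k + 1), Set.range ⇑(Cseq j))) := by
  intro k
  have hC (j : ℕ) : (Cseq (j + 1) : H →ₗ[ℂ] H) = J * Cseq j - Cseq j * J := by
    rw [hCsucc]; rfl
  have hpow (j : ℕ) : ((J ^ j) ∘L S : H →ₗ[ℂ] H) = (J : H →ₗ[ℂ] H) ^ j * S := by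
    rw [← toLinearMap_pow]; rfl
  have hspans : ⨆ j ∈ Finset.range (k + 1), LinearMap.range (Cseq j : H →ₗ[ℂ] H) =
      ⨆ j ∈ Finset.range (k + 1), LinearMap.range ((J ^ j) ∘L S : H →ₗ[ℂ] H) := by
    rw [Module.End.biSup_range_commutator_eq_krylovSubspace hC, hC0]
    simp only [hpow, Module.End.biSup_range_pow_mul_eq_krylovSubspace]
  have hmem : k ∈ Finset.range (k + 1) := Finset.self_mem_range_succ k
  exact ⟨(le_biSup _ hmem).trans (hspans.trans (LinearMap.span_iUnion₂_range _ _).symm).le,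
    (le_biSup _ hmem).trans (hspans.symm.trans (LinearMap.span_iUnion₂_range _ _).symm).le⟩

/-- with `C₀ = √R` and iterated commutators `C_{j+1} = J C_j − C_j J`, for every
`k` the range of `C_k` lies in the span of the ranges of `J^j ∘ √R`, `j ≤ k`, and conversely
the range of `J^k ∘ √R` lies in the span of the ranges of `C_j`, `j ≤ k`. -/
theorem range_commutator_subset_span_and_conversely
    {H : Type*} [NormedAddCommGroup H] [InnerProductSpace ℂ H]
    [CompleteSpace H] [TopologicalSpace.SeparableSpace H]
    (J R S : H →L[ℂ] H)
    (hJ : ContinuousLinearMap.adjoint J = -J)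
    (hR : R.IsPositive)
    (hS : S.IsPositive) (hS2 : S * S = R)
    (Cseq : ℕ → (H →L[ℂ] H))
    (hC0 : Cseq 0 = S)
    (hCsucc : ∀ j : ℕ, Cseq (j + 1) = J * Cseq j - Cseq j * J) :
    ∀ k : ℕ,
      (LinearMap.range (Cseq k : H →ₗ[ℂ] H) ≤
        Submodule.span ℂ (⋃ j ∈ Finset.range (k + 1), Set.range ⇑((J ^ j) ∘L S))) ∧
      (LinearMap.range ((J ^ k) ∘L S : H →ₗ[ℂ] H) ≤
        Submodule.span ℂ (⋃ j ∈ Finset.range (k + 1), Set.range ⇑(Cseq j))) :=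
  range_commutator_subset_span_and_conversely_general J S Cseq hC0 hCsucc
end

section
/- On H = ℓ²(ℕ) realized as a direct sum of 2-dimensional blocks, let R be the block-diagonal operator with blocks diag(1/n, 1) and J the block-diagonal operator with blocks [[0,-1],[1,0]]. Then there is no κ > 0 with R ≥ κI, but R + J R J* = diag-blocks diag(1 + 1/n, 1 + 1/n) ≥ I. Hence the hypocoercivity index of C = R − J equals 1 even though ker R = {0}. -/
/-!
The vectors `lp.single n (e k)` form a Hilbert basis in which `R` is diagonal, with eigenvalues
`1 / (n + 1)` and `1` on block `n`. Conjugating by the rotation `J` swaps the two diagonal entries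
of a block, so `R + J R J*` is diagonal in the same basis with eigenvalue `1 + 1 / (n + 1)`. For an
operator diagonal in a Hilbert basis the quadratic form is an eigenvalue-weighted Parseval sum,
hence it is `≥ κ ‖x‖²` exactly when every eigenvalue is `≥ κ`: this fails for `R`, whose
eigenvalues accumulate at `0`, and holds with `κ = 1` for `R + J R J*`. No eigenvalue of `R`
vanishes, so `R` is injective.
-/

open ContinuousLinearMap
open scoped InnerProductSpace

theorem EuclideanSpace.single_eq_smul_single_one {ι 𝕜 : Type*} [RCLike 𝕜] [DecidableEq ι]
    (i : ι) (c : 𝕜) : EuclideanSpace.single i c = c • EuclideanSpace.single i (1 : 𝕜) := by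
  ext j
  simp [PiLp.single_apply]

namespace HilbertBasis

variable {ι κ 𝕜 E F : Type*} [RCLike 𝕜] [NormedAddCommGroup F] [InnerProductSpace 𝕜 F]
  [NormedAddCommGroup E] [InnerProductSpace 𝕜 E]

open RCLike

section lpSingle

variable [DecidableEq ι] (b : HilbertBasis κ 𝕜 F)

theorem orthonormal_lp_single :
    Orthonormal 𝕜 fun p : ι × κ => lp.single (E := fun _ : ι => F) 2 p.1 (b p.2) := by
  classical
  rw [orthonormal_iff_ite]
  rintro ⟨i, k⟩ ⟨j, l⟩
  rw [lp.inner_single_left, lp.single_apply]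
  by_cases hij : i = j
  · subst hij
    simp [orthonormal_iff_ite.mp b.orthonormal]
  · simp [hij]

theorem orthogonal_span_lp_single :
    (Submodule.span 𝕜 (Set.range fun p : ι × κ =>
      lp.single (E := fun _ : ι => F) 2 p.1 (b p.2)))ᗮ = ⊥ := by
  refine (Submodule.eq_bot_iff _).mpr fun x hx => ?_
  ext i : 2
  refine b.repr.injective (lp.ext (funext fun k => ?_))
  have h := (Submodule.mem_orthogonal _ x).mp hx _ (Submodule.subset_span ⟨(i, k), rfl⟩)
  rw [lp.inner_single_left] at h
  simpa [b.repr_apply_apply] using h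

variable [CompleteSpace F]

variable (ι) in
noncomputable def lpSingle : HilbertBasis (ι × κ) 𝕜 (lp (fun _ : ι => F) 2) :=
  .mkOfOrthogonalEqBot b.orthonormal_lp_single b.orthogonal_span_lp_single

@[simp]
theorem lpSingle_apply (i : ι) (k : κ) : b.lpSingle ι (i, k) = lp.single 2 i (b k) := by
  simp [lpSingle]

end lpSingle

variable (b : HilbertBasis ι 𝕜 E) {T : E →L[𝕜] E}

theorem repr_apply_of_apply_eq_smul {d : ι → 𝕜} (hT : ∀ i, T (b i) = d i • b i) (x : E) (i : ι) :
    b.repr (T x) i = d i * b.repr x i := by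
  classical
  have h := ((b.hasSum_repr x).mapL T).mapL (innerSL 𝕜 (b i))
  simp only [map_smul, hT, innerSL_apply_apply, orthonormal_iff_ite.mp b.orthonormal] at h
  rw [b.repr_apply_apply, h.unique]
  convert hasSum_ite_eq i (d i * b.repr x i) using 1
  funext j
  rcases eq_or_ne j i with rfl | hji
  · simp [mul_comm]
  · simp [hji, hji.symm]

theorem hasSum_re_inner_apply_self {d : ι → ℝ} (hT : ∀ i, T (b i) = (d i : 𝕜) • b i) (x : E) :
    HasSum (fun i => d i * ‖b.repr x i‖ ^ 2) (re ⟪T x, x⟫_𝕜) := by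
  have h := RCLike.hasSum_re _ (b.hasSum_inner_mul_inner x (T x))
  rw [inner_re_symm]
  convert h using 1
  funext i
  rw [← b.repr_apply_apply, b.repr_apply_of_apply_eq_smul hT, ← inner_conj_symm,
    ← b.repr_apply_apply, mul_left_comm, RCLike.conj_mul]
  norm_cast

theorem le_of_forall_mul_norm_sq_le_re_inner {d : ι → ℝ} (hT : ∀ i, T (b i) = (d i : 𝕜) • b i)
    {κ : ℝ} (hκ : ∀ x, κ * ‖x‖ ^ 2 ≤ re ⟪T x, x⟫_𝕜) (i : ι) : κ ≤ d i := by
  simpa [hT, inner_smul_left, b.orthonormal.1 i] using hκ (b i)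

theorem hasSum_norm_repr_sq (x : E) : HasSum (fun i => ‖b.repr x i‖ ^ 2) (‖x‖ ^ 2) := by
  simpa using b.hasSum_re_inner_apply_self (T := 1) (d := 1) (by simp) x

theorem mul_norm_sq_le_re_inner {d : ι → ℝ} (hT : ∀ i, T (b i) = (d i : 𝕜) • b i) {κ : ℝ}
    (hκ : ∀ i, κ ≤ d i) (x : E) : κ * ‖x‖ ^ 2 ≤ re ⟪T x, x⟫_𝕜 :=
  hasSum_le (fun i => mul_le_mul_of_nonneg_right (hκ i) (sq_nonneg _))
    ((b.hasSum_norm_repr_sq x).mul_left κ) (b.hasSum_re_inner_apply_self hT x)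

theorem ker_eq_bot_of_apply_eq_smul {d : ι → 𝕜} (hT : ∀ i, T (b i) = d i • b i)
    (hd : ∀ i, d i ≠ 0) : LinearMap.ker T.toLinearMap = ⊥ := by
  refine (Submodule.eq_bot_iff _).mpr fun x hx => b.repr.injective (lp.ext (funext fun i => ?_))
  have h := b.repr_apply_of_apply_eq_smul hT x i
  rw [show T x = 0 from hx] at h
  simpa [hd i, eq_comm] using h

end HilbertBasis

namespace ContinuousLinearMap

variable {𝕜 E : Type*} [RCLike 𝕜] [NormedAddCommGroup E] [InnerProductSpace 𝕜 E] [CompleteSpace E]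
  {R J : E →L[𝕜] E} {e₀ e₁ : E} {s t : ℝ}

variable (hJ : adjoint J = -J) (hR₀ : R e₀ = (s : 𝕜) • e₀) (hR₁ : R e₁ = (t : 𝕜) • e₁)
  (hJ₀ : J e₀ = e₁) (hJ₁ : J e₁ = -e₀)
include hJ hR₀ hR₁ hJ₀ hJ₁

theorem add_mul_mul_adjoint_apply_left :
    (R + J * R * adjoint J) e₀ = ((s + t : ℝ) : 𝕜) • e₀ := by
  simp only [add_apply, mul_apply_eq_comp, hJ, neg_apply, map_neg, hJ₀, hR₁, map_smul, hJ₁, hR₀]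
  push_cast
  module

theorem add_mul_mul_adjoint_apply_right :
    (R + J * R * adjoint J) e₁ = ((s + t : ℝ) : 𝕜) • e₁ := by
  simp only [add_apply, mul_apply_eq_comp, hJ, neg_apply, hJ₁, neg_neg, hR₀, map_smul, hJ₀, hR₁]
  push_cast
  module

end ContinuousLinearMap

theorem block_diagonal_hypocoercivity_index_one_general
    (R J : lp (fun _ : ℕ => EuclideanSpace ℂ (Fin 2)) 2 →L[ℂ]
           lp (fun _ : ℕ => EuclideanSpace ℂ (Fin 2)) 2)
    (hJ : ContinuousLinearMap.adjoint J = -J)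
    (hR0 : ∀ n : ℕ, R (lp.single 2 n (EuclideanSpace.single 0 (1 : ℂ))) =
      lp.single 2 n (EuclideanSpace.single 0 ((1 : ℂ) / (n + 1))))
    (hR1 : ∀ n : ℕ, R (lp.single 2 n (EuclideanSpace.single 1 (1 : ℂ))) =
      lp.single 2 n (EuclideanSpace.single 1 (1 : ℂ)))
    (hJ0 : ∀ n : ℕ, J (lp.single 2 n (EuclideanSpace.single 0 (1 : ℂ))) =
      lp.single 2 n (EuclideanSpace.single 1 (1 : ℂ)))
    (hJ1 : ∀ n : ℕ, J (lp.single 2 n (EuclideanSpace.single 1 (1 : ℂ))) =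
      -lp.single 2 n (EuclideanSpace.single 0 (1 : ℂ))) :
    (¬ ∃ κ : ℝ, 0 < κ ∧ ∀ x, κ * ‖x‖ ^ 2 ≤ (⟪R x, x⟫_ℂ).re) ∧
    (∀ x, ‖x‖ ^ 2 ≤ (⟪(R + J * R * ContinuousLinearMap.adjoint J) x, x⟫_ℂ).re) ∧
    IsLeast {m : ℕ | ∃ κ : ℝ, 0 < κ ∧ ∀ x,
      κ * ‖x‖ ^ 2 ≤ (⟪(∑ j ∈ Finset.range (m + 1),
        (J ^ j) * R * (ContinuousLinearMap.adjoint J) ^ j) x, x⟫_ℂ).re} 1 ∧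
    LinearMap.ker R.toLinearMap = ⊥ := by
  set b := (EuclideanSpace.basisFun (Fin 2) ℂ).toHilbertBasis.lpSingle ℕ
  have hb : ∀ n k, b (n, k) = lp.single 2 n (EuclideanSpace.single k 1) := by simp [b]
  have hRb0 (n : ℕ) : R (b (n, 0)) = ((1 / ((n : ℝ) + 1) : ℝ) : ℂ) • b (n, 0) := by
    rw [hb, hR0, EuclideanSpace.single_eq_smul_single_one 0 (1 / _), lp.single_smul]
    norm_num
  have hRb1 (n : ℕ) : R (b (n, 1)) = ((1 : ℝ) : ℂ) • b (n, 1) := by simp [hb, hR1]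
  have hJb0 (n : ℕ) : J (b (n, 0)) = b (n, 1) := by rw [hb, hb, hJ0]
  have hJb1 (n : ℕ) : J (b (n, 1)) = -b (n, 0) := by rw [hb, hb, hJ1]
  have hRb : ∀ p, R (b p) = ((![1 / ((p.1 : ℝ) + 1), 1] p.2 : ℝ) : ℂ) • b p := by
    simp only [Prod.forall, Fin.forall_fin_two]
    exact fun n => ⟨by simpa using hRb0 n, by simpa using hRb1 n⟩
  have hTb : ∀ p, (R + J * R * adjoint J) (b p) = ((1 / ((p.1 : ℝ) + 1) + 1 : ℝ) : ℂ) • b p := by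
    simp only [Prod.forall, Fin.forall_fin_two]
    exact fun n => ⟨add_mul_mul_adjoint_apply_left hJ (hRb0 n) (hRb1 n) (hJb0 n) (hJb1 n),
      add_mul_mul_adjoint_apply_right hJ (hRb0 n) (hRb1 n) (hJb0 n) (hJb1 n)⟩
  have hR_not : ¬ ∃ κ : ℝ, 0 < κ ∧ ∀ x, κ * ‖x‖ ^ 2 ≤ (⟪R x, x⟫_ℂ).re := by
    rintro ⟨κ, hκ, hR⟩
    obtain ⟨n, hn⟩ := exists_nat_one_div_lt hκ
    exact hn.not_ge (b.le_of_forall_mul_norm_sq_le_re_inner hRb hR (n, 0))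
  have hT : ∀ x, ‖x‖ ^ 2 ≤ (⟪(R + J * R * adjoint J) x, x⟫_ℂ).re := fun x => by
    simpa only [one_mul, RCLike.re_to_complex] using
      b.mul_norm_sq_le_re_inner hTb (fun p => le_add_of_nonneg_left (by positivity)) x
  refine ⟨hR_not, hT, ⟨⟨1, one_pos, by simpa [Finset.sum_range_succ] using hT⟩, ?_⟩,
    b.ker_eq_bot_of_apply_eq_smul hRb fun ⟨n, k⟩ => ?_⟩
  · rintro (_ | m) hm
    · exact absurd (by simpa using hm) hR_not
    · omega
  · fin_cases k <;> simp [Nat.cast_add_one_ne_zero]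

/-- on `H = ⊕ₙ ℂ²`, with block-diagonal `R` (blocks `diag(1/n, 1)`) and `J`
(blocks `[[0,-1],[1,0]]`), `R` is not bounded below by any `κ I`, yet `R + J R J* ≥ I`;
hence `C = R − J` has hypocoercivity index 1 even though `ker R = {0}`. -/
theorem block_diagonal_hypocoercivity_index_one
    (R J : lp (fun _ : ℕ => EuclideanSpace ℂ (Fin 2)) 2 →L[ℂ]
           lp (fun _ : ℕ => EuclideanSpace ℂ (Fin 2)) 2)
    (hRsa : R.IsPositive)
    (hJ : ContinuousLinearMap.adjoint J = -J)
    (hR0 : ∀ n : ℕ, R (lp.single 2 n (EuclideanSpace.single 0 (1 : ℂ))) =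
      lp.single 2 n (EuclideanSpace.single 0 ((1 : ℂ) / (n + 1))))
    (hR1 : ∀ n : ℕ, R (lp.single 2 n (EuclideanSpace.single 1 (1 : ℂ))) =
      lp.single 2 n (EuclideanSpace.single 1 (1 : ℂ)))
    (hJ0 : ∀ n : ℕ, J (lp.single 2 n (EuclideanSpace.single 0 (1 : ℂ))) =
      lp.single 2 n (EuclideanSpace.single 1 (1 : ℂ)))
    (hJ1 : ∀ n : ℕ, J (lp.single 2 n (EuclideanSpace.single 1 (1 : ℂ))) =
      -lp.single 2 n (EuclideanSpace.single 0 (1 : ℂ))) :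
    (¬ ∃ κ : ℝ, 0 < κ ∧ ∀ x, κ * ‖x‖ ^ 2 ≤ (⟪R x, x⟫_ℂ).re) ∧
    (∀ x, ‖x‖ ^ 2 ≤ (⟪(R + J * R * ContinuousLinearMap.adjoint J) x, x⟫_ℂ).re) ∧
    IsLeast {m : ℕ | ∃ κ : ℝ, 0 < κ ∧ ∀ x,
      κ * ‖x‖ ^ 2 ≤ (⟪(∑ j ∈ Finset.range (m + 1),
        (J ^ j) * R * (ContinuousLinearMap.adjoint J) ^ j) x, x⟫_ℂ).re} 1 ∧
    LinearMap.ker R.toLinearMap = ⊥ :=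
  block_diagonal_hypocoercivity_index_one_general R J hJ hR0 hR1 hJ0 hJ1
end

section
/- Let C ∈ B(H) be accretive (i.e., its self-adjoint part C_H = (C + C*)/2 is nonnegative) and coercive in the sense that C_H ≥ κI for some κ > 0. Then there exist constants M > 0 such that for all unit vectors x and all t ∈ [0,1], ‖e^{-Ct}x‖² ≤ 1 − 2κt + M t², and in particular ‖e^{-Ct}‖ < 1 for all sufficiently small t > 0. -/
/-!
Write `e^{-tC} = 1 - tC + R_t` with `‖R_t‖ ≤ t² ‖C‖² e^{‖C‖}` for `|t| ≤ 1`, from the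
exponential series. Then `‖x - tCx‖² = ‖x‖² - 2t Re⟪Cx, x⟫ + t²‖Cx‖²`, and `Re⟪Cx, x⟫` is the
quadratic form of `C_H`, so coercivity gives the first-order term `-2κt`; the remainder only
contributes at order `t²`. For `0 < t < 2κ/M` the bound `1 - 2κt + Mt²` is below `1`.
-/

open ContinuousLinearMap
open scoped InnerProductSpace Nat

section ExpRemainder

variable {𝔸 : Type*} [NormedRing 𝔸] [NormedAlgebra ℝ 𝔸] [CompleteSpace 𝔸]

theorem norm_exp_sub_one_sub_le (A : 𝔸) :
    ‖NormedSpace.exp A - 1 - A‖ ≤ ‖A‖ ^ 2 * Real.exp ‖A‖ := by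
  have htail :
      HasSum (fun n : ℕ => ((n + 2)! : ℝ)⁻¹ • A ^ (n + 2)) (NormedSpace.exp A - 1 - A) := by
    have h := (hasSum_nat_add_iff' 2).mpr (NormedSpace.exp_series_hasSum_exp' (𝕂 := ℝ) A)
    simpa [Finset.sum_range_succ, sub_sub] using h
  have hexp : HasSum (fun n : ℕ => ‖A‖ ^ 2 * (‖A‖ ^ n / n !)) (‖A‖ ^ 2 * Real.exp ‖A‖) := by
    rw [Real.exp_eq_exp_ℝ]
    exact (NormedSpace.expSeries_div_hasSum_exp ‖A‖).mul_left _
  have hterm (n : ℕ) : ‖((n + 2)! : ℝ)⁻¹ • A ^ (n + 2)‖ ≤ ‖A‖ ^ 2 * (‖A‖ ^ n / n !) := by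
    rw [norm_smul, norm_inv, RCLike.norm_natCast]
    calc ((n + 2)! : ℝ)⁻¹ * ‖A ^ (n + 2)‖ ≤ (n ! : ℝ)⁻¹ * ‖A‖ ^ (n + 2) := by
          gcongr
          · omega
          · exact norm_pow_le' A (by omega)
      _ = ‖A‖ ^ 2 * (‖A‖ ^ n / n !) := by ring
  exact htail.norm_le_of_bounded hexp hterm

theorem norm_exp_smul_sub_one_sub_le (A : 𝔸) {t : ℝ} (ht : |t| ≤ 1) :
    ‖NormedSpace.exp (t • A) - 1 - t • A‖ ≤ t ^ 2 * (‖A‖ ^ 2 * Real.exp ‖A‖) := by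
  have hnorm : ‖t • A‖ = |t| * ‖A‖ := by rw [norm_smul, Real.norm_eq_abs]
  calc ‖NormedSpace.exp (t • A) - 1 - t • A‖ ≤ ‖t • A‖ ^ 2 * Real.exp ‖t • A‖ :=
        norm_exp_sub_one_sub_le _
    _ ≤ (|t| * ‖A‖) ^ 2 * Real.exp ‖A‖ := by
        rw [hnorm]
        gcongr
        exact mul_le_of_le_one_left (norm_nonneg _) ht
    _ = t ^ 2 * (‖A‖ ^ 2 * Real.exp ‖A‖) := by rw [mul_pow, sq_abs]; ring

end ExpRemainder

theorem ContinuousLinearMap.opNorm_lt_one_of_norm_apply_sq_le {𝕜 E F : Type*}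
    [NontriviallyNormedField 𝕜] [SeminormedAddCommGroup E] [SeminormedAddCommGroup F]
    [NormedSpace 𝕜 E] [NormedSpace 𝕜 F] (T : E →L[𝕜] F) {c : ℝ} (hc : c < 1)
    (hT : ∀ x, ‖T x‖ ^ 2 ≤ c * ‖x‖ ^ 2) : ‖T‖ < 1 := by
  have hc₀ : 0 ≤ max c 0 := le_max_right c 0
  have hbound : ‖T‖ ≤ √(max c 0) := by
    refine T.opNorm_le_bound (Real.sqrt_nonneg _) fun x => ?_
    rw [← Real.sqrt_sq (norm_nonneg x), ← Real.sqrt_mul hc₀,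
      Real.le_sqrt (norm_nonneg _) (by positivity)]
    exact (hT x).trans (by gcongr; exact le_max_left c 0)
  calc ‖T‖ ≤ √(max c 0) := hbound
    _ < 1 := by rw [Real.sqrt_lt' one_pos, one_pow]; exact max_lt hc one_pos

section ShortTimeExpansion

variable {H : Type*} [NormedAddCommGroup H] [InnerProductSpace ℂ H]

theorem norm_sub_real_smul_sq (x y : H) (t : ℝ) :
    ‖x - t • y‖ ^ 2 = ‖x‖ ^ 2 - 2 * t * (⟪y, x⟫_ℂ).re + t ^ 2 * ‖y‖ ^ 2 := by
  rw [@norm_sub_sq ℂ, ← Complex.coe_smul, inner_smul_right, norm_smul, ← inner_conj_symm]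
  simp only [RCLike.re_to_complex, Complex.re_ofReal_mul, Complex.conj_re, Complex.norm_real,
    Real.norm_eq_abs, mul_pow, sq_abs]
  ring

variable [CompleteSpace H]

theorem re_inner_half_smul_add_adjoint_apply_self (C : H →L[ℂ] H) (x : H) :
    (⟪(((1 : ℂ) / 2) • (C + adjoint C)) x, x⟫_ℂ).re = (⟪C x, x⟫_ℂ).re := by
  rw [smul_apply, inner_smul_left, add_apply, inner_add_left, adjoint_inner_left,
    ← inner_conj_symm x (C x), Complex.add_conj]
  simp

theorem exists_norm_exp_neg_smul_apply_sq_le (C : H →L[ℂ] H) :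
    ∃ M, 0 ≤ M ∧ ∀ t : ℝ, |t| ≤ 1 → ∀ x : H,
      ‖NormedSpace.exp (-(t • C)) x‖ ^ 2 ≤
        ‖x‖ ^ 2 - 2 * t * (⟪C x, x⟫_ℂ).re + M * t ^ 2 * ‖x‖ ^ 2 := by
  set K := ‖C‖ ^ 2 * Real.exp ‖C‖
  have hK : 0 ≤ K := by positivity
  refine ⟨(‖C‖ + K) ^ 2 + 2 * K, by positivity, fun t ht x => ?_⟩
  set y := x - t • C x
  set R := NormedSpace.exp ((-t) • C) - 1 - (-t) • C
  have hsplit : NormedSpace.exp (-(t • C)) x = y + R x := by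
    simp [y, R, neg_smul, sub_apply, smul_apply]
  have hR : ‖R x‖ ≤ t ^ 2 * K * ‖x‖ := by
    have h := norm_exp_smul_sub_one_sub_le C (t := -t) (by rwa [abs_neg])
    rw [neg_sq] at h
    exact (R.le_opNorm x).trans (by gcongr)
  have hy : ‖y‖ ≤ (1 + ‖C‖) * ‖x‖ := by
    calc ‖y‖ ≤ ‖x‖ + |t| * (‖C‖ * ‖x‖) := by
          refine (norm_sub_le _ _).trans ?_
          rw [norm_smul, Real.norm_eq_abs]
          gcongr
          exact C.le_opNorm x
      _ ≤ (1 + ‖C‖) * ‖x‖ := by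
          nlinarith [mul_le_of_le_one_left (by positivity : 0 ≤ ‖C‖ * ‖x‖) ht]
  have hy2 : ‖y‖ ^ 2 ≤ ‖x‖ ^ 2 - 2 * t * (⟪C x, x⟫_ℂ).re + t ^ 2 * (‖C‖ ^ 2 * ‖x‖ ^ 2) := by
    rw [norm_sub_real_smul_sq]
    gcongr _ + _ * ?_
    rw [← mul_pow]
    gcongr
    exact C.le_opNorm x
  have ht2 : t ^ 2 ≤ 1 := by rwa [← sq_abs, sq_le_one_iff₀ (abs_nonneg t)]
  have hR2 : ‖R x‖ ^ 2 ≤ t ^ 2 * (K ^ 2 * ‖x‖ ^ 2) := by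
    calc ‖R x‖ ^ 2 ≤ (t ^ 2 * K * ‖x‖) ^ 2 := by gcongr
      _ = t ^ 2 * (K ^ 2 * ‖x‖ ^ 2) * t ^ 2 := by ring
      _ ≤ t ^ 2 * (K ^ 2 * ‖x‖ ^ 2) := mul_le_of_le_one_right (by positivity) ht2
  have hyR : ‖y‖ * ‖R x‖ ≤ t ^ 2 * ((1 + ‖C‖) * K * ‖x‖ ^ 2) := by
    calc ‖y‖ * ‖R x‖ ≤ (1 + ‖C‖) * ‖x‖ * (t ^ 2 * K * ‖x‖) := by gcongr
      _ = t ^ 2 * ((1 + ‖C‖) * K * ‖x‖ ^ 2) := by ring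
  calc ‖NormedSpace.exp (-(t • C)) x‖ ^ 2 ≤ (‖y‖ + ‖R x‖) ^ 2 := by
        rw [hsplit]; gcongr; exact norm_add_le _ _
    _ = ‖y‖ ^ 2 + 2 * (‖y‖ * ‖R x‖) + ‖R x‖ ^ 2 := by ring
    _ ≤ ‖x‖ ^ 2 - 2 * t * (⟪C x, x⟫_ℂ).re + ((‖C‖ + K) ^ 2 + 2 * K) * t ^ 2 * ‖x‖ ^ 2 := by
        linarith

end ShortTimeExpansion

theorem coercive_short_time_decay_general
    {H : Type*} [NormedAddCommGroup H] [InnerProductSpace ℂ H]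
    [CompleteSpace H]
    (C : H →L[ℂ] H) (κ : ℝ) (hκ : 0 < κ)
    (hcoer : ∀ x : H, κ * ‖x‖ ^ 2 ≤
      (⟪(((1 : ℂ) / 2) • (C + ContinuousLinearMap.adjoint C)) x, x⟫_ℂ).re) :
    (∃ M : ℝ, 0 < M ∧ ∀ x : H, ‖x‖ = 1 → ∀ t ∈ Set.Icc (0 : ℝ) 1,
      ‖(NormedSpace.exp (-((t : ℂ) • C))) x‖ ^ 2 ≤ 1 - 2 * κ * t + M * t ^ 2) ∧
    ∃ t₀ : ℝ, 0 < t₀ ∧ ∀ t ∈ Set.Ioo (0 : ℝ) t₀,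
      ‖NormedSpace.exp (-((t : ℂ) • C))‖ < 1 := by
  obtain ⟨M, hM, hexp⟩ := exists_norm_exp_neg_smul_apply_sq_le C
  have hdecay : ∀ t ∈ Set.Icc (0 : ℝ) 1, ∀ x : H, ‖NormedSpace.exp (-((t : ℂ) • C)) x‖ ^ 2 ≤
      (1 - 2 * κ * t + (M + 1) * t ^ 2) * ‖x‖ ^ 2 := by
    intro t ⟨ht₀, ht₁⟩ x
    have hre := mul_le_mul_of_nonneg_left
      ((hcoer x).trans_eq (re_inner_half_smul_add_adjoint_apply_self C x)) ht₀
    rw [Complex.coe_smul]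
    linarith [hexp t (abs_le.mpr ⟨by linarith, ht₁⟩) x, mul_nonneg (sq_nonneg t) (sq_nonneg ‖x‖)]
  refine ⟨⟨M + 1, by positivity, fun x hx t ht => by simpa [hx] using hdecay t ht x⟩,
    min 1 (2 * κ / (M + 1)), by positivity, fun t ⟨ht₀, ht⟩ => ?_⟩
  have hMt : (M + 1) * t < 2 * κ := by
    rw [← lt_div_iff₀' (by positivity)]; exact ht.trans_le (min_le_right _ _)
  refine opNorm_lt_one_of_norm_apply_sq_le _ ?_
    (hdecay t ⟨ht₀.le, (ht.trans_le (min_le_left _ _)).le⟩)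
  nlinarith [mul_lt_mul_of_pos_left hMt ht₀]

/-- for accretive, coercive `C` (`C_H ≥ κ I`, `κ > 0`), there is `M > 0` with
`‖e^{-Ct}x‖² ≤ 1 − 2κt + Mt²` for unit `x` and `t ∈ [0,1]`; in particular `‖e^{-Ct}‖ < 1`
for all small `t > 0`. -/
theorem coercive_short_time_decay
    {H : Type*} [NormedAddCommGroup H] [InnerProductSpace ℂ H]
    [CompleteSpace H] [TopologicalSpace.SeparableSpace H]
    (C : H →L[ℂ] H) (κ : ℝ) (hκ : 0 < κ)
    (hacc : ∀ x : H, 0 ≤ (⟪C x, x⟫_ℂ).re)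
    (hcoer : ∀ x : H, κ * ‖x‖ ^ 2 ≤
      (⟪(((1 : ℂ) / 2) • (C + ContinuousLinearMap.adjoint C)) x, x⟫_ℂ).re) :
    (∃ M : ℝ, 0 < M ∧ ∀ x : H, ‖x‖ = 1 → ∀ t ∈ Set.Icc (0 : ℝ) 1,
      ‖(NormedSpace.exp (-((t : ℂ) • C))) x‖ ^ 2 ≤ 1 - 2 * κ * t + M * t ^ 2) ∧
    ∃ t₀ : ℝ, 0 < t₀ ∧ ∀ t ∈ Set.Ioo (0 : ℝ) t₀,
      ‖NormedSpace.exp (-((t : ℂ) • C))‖ < 1 :=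
  coercive_short_time_decay_general C κ hκ hcoer
end

section
/- Let C ∈ B(H) with C = C_H + C_S (self-adjoint and skew-adjoint parts) and define U_j = (-1)^j ∑_{k=0}^{j} binom(j,k) (C*)^k C^{j-k} for j ∈ ℕ. Then for all j ≥ 1, U_j = (-1)^j · 2 · ∑_{k=0}^{j-1} binom(j-1,k) (C*)^k C_H C^{j-1-k}. -/
open ContinuousLinearMap
open scoped InnerProductSpace

/-- with `U_j = (-1)^j ∑_{k=0}^j C(j,k) (C*)^k C^{j-k}`, for all `j ≥ 1` one has
`U_j = (-1)^j · 2 · ∑_{k=0}^{j-1} C(j-1,k) (C*)^k C_H C^{j-1-k}` where `C_H = (C + C*)/2`. -/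
theorem Uj_eq_sum_with_hermitian_part
    {H : Type*} [NormedAddCommGroup H] [InnerProductSpace ℂ H]
    [CompleteSpace H]
    (C : H →L[ℂ] H) :
    ∀ j : ℕ, 1 ≤ j →
      ((-1 : ℂ) ^ j) • ∑ k ∈ Finset.range (j + 1),
          ((j.choose k : ℂ)) • ((ContinuousLinearMap.adjoint C) ^ k * C ^ (j - k)) =
      (((-1 : ℂ) ^ j) * 2) • ∑ k ∈ Finset.range j,
          (((j - 1).choose k : ℂ)) •
            ((ContinuousLinearMap.adjoint C) ^ k *
              (((1 : ℂ) / 2) • (C + ContinuousLinearMap.adjoint C)) * C ^ (j - 1 - k)) := by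
  intro j hj
  obtain ⟨n, rfl⟩ : ∃ n, j = n + 1 := ⟨j - 1, (Nat.succ_pred_eq_of_pos hj).symm⟩
  set A := ContinuousLinearMap.adjoint C with hA
  simp only [Nat.add_sub_cancel, mul_smul]
  congr 1
  rw [Finset.smul_sum]
  -- rewrite each RHS term
  have h1 : ∑ k ∈ Finset.range (n + 1), (2 : ℂ) • ((n.choose k : ℂ) •
        (A ^ k * (((1:ℂ)/2) • (C + A)) * C ^ (n - k)))
      = ∑ k ∈ Finset.range (n + 1), ((n.choose k : ℂ) • (A ^ k * C ^ (n + 1 - k))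
        + (n.choose k : ℂ) • (A ^ (k + 1) * C ^ (n - k))) := by
    refine Finset.sum_congr rfl fun k hk => ?_
    have hk' : k ≤ n := Nat.lt_succ_iff.mp (Finset.mem_range.mp hk)
    have e1 : n + 1 - k = (n - k) + 1 := by omega
    have hop : A ^ k * (((1:ℂ)/2) • (C + A)) * C ^ (n - k)
        = ((1:ℂ)/2) • (A ^ k * C ^ (n - k + 1) + A ^ (k + 1) * C ^ (n - k)) := by
      rw [mul_smul_comm, smul_mul_assoc]
      congr 1
      simp only [mul_add, add_mul, pow_succ, pow_succ', mul_assoc]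
      rw [((Commute.refl C).pow_right (n - k)).eq]
    rw [e1, hop, smul_smul, smul_smul, smul_add]
    have h2 : (2 : ℂ) * (n.choose k : ℂ) * ((1:ℂ)/2) = (n.choose k : ℂ) := by ring
    rw [h2]
  rw [h1, Finset.sum_add_distrib]
  -- handle LHS
  rw [Finset.sum_range_succ' (fun k => ((n+1).choose k : ℂ) • (A ^ k * C ^ (n + 1 - k)))]
  rw [Finset.sum_range_succ' (fun k => ((n).choose k : ℂ) • (A ^ k * C ^ (n + 1 - k)))]
  simp only [Nat.choose_zero_right, Nat.cast_one, one_smul, pow_zero, one_mul,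
    Nat.sub_zero, Nat.succ_sub_succ_eq_sub, Nat.choose_succ_succ, Nat.cast_add, add_smul,
    Nat.succ_eq_add_one, Finset.sum_add_distrib]
  rw [Finset.sum_range_succ (fun x => ((n.choose (x + 1) : ℂ)) • (A ^ (x + 1) * C ^ (n - x)))]
  simp only [Nat.choose_succ_self, Nat.cast_zero, zero_smul, add_zero]
  abel
end

section
/- Let C ∈ B(H) be accretive, and suppose the semigroup satisfies ‖e^{-C t₀}‖ < 1 for some t₀ > 0. Then C has a finite hypocoercivity index: there exist m ∈ ℕ and κ > 0 such that ∑_{j=0}^{m} (C*)^j C_H C^j ≥ κ I. -/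
/-!
Write `Re⟪C y, y⟫ = ‖S y‖²` with `S` the square root of the Hermitian part `C_H ≥ 0`, and let
`u(s) = e^{-sC} x`. Since `d/ds ‖u(s)‖² = -2‖S u(s)‖²`, the decay `‖e^{-t₀C}‖ < 1` forces
`‖S u(s)‖²` to be at least `(1 - ‖e^{-t₀C}‖²) ‖x‖² / (2t₀)` somewhere on `[0, t₀]`. Splitting
`e^{-sC}` into its Taylor polynomial of degree `m` and a tail that is uniformly small on
`[0, t₀]` bounds `‖S u(s)‖²` by a multiple of `∑_{j ≤ m} ‖S C^j x‖²`, the quadratic form of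
`∑_{j ≤ m} (C*)^j C_H C^j`, plus a multiple of `‖x‖²` that tends to `0` as `m → ∞`.
-/

open ContinuousLinearMap
open scoped InnerProductSpace

open Filter Topology
open scoped Nat

noncomputable def expTail (r : ℝ) (N : ℕ) : ℝ := ∑' n, r ^ (n + N) / (n + N)!

lemma summable_expTail_terms (r : ℝ) (N : ℕ) :
    Summable fun n ↦ r ^ (n + N) / (n + N)! :=
  (summable_nat_add_iff N).2 (Real.summable_pow_div_factorial r)

lemma expTail_mono {r r' : ℝ} (hr : 0 ≤ r) (hrr' : r ≤ r') (N : ℕ) :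
    expTail r N ≤ expTail r' N :=
  Summable.tsum_le_tsum (fun n ↦ by gcongr) (summable_expTail_terms r N)
    (summable_expTail_terms r' N)

lemma tendsto_expTail (r : ℝ) : Tendsto (expTail r) atTop (𝓝 0) :=
  tendsto_sum_nat_add fun n ↦ r ^ n / n !

section BanachAlgebra

variable {𝔸 : Type*} [NormedRing 𝔸] [NormedAlgebra ℝ 𝔸] [CompleteSpace 𝔸]

lemma norm_exp_sub_sum_range_le (b : 𝔸) (N : ℕ) :
    ‖NormedSpace.exp b - ∑ n ∈ Finset.range (N + 1), (n !⁻¹ : ℝ) • b ^ n‖ ≤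
      expTail ‖b‖ (N + 1) := by
  have hsum := NormedSpace.exp_series_hasSum_exp' (𝕂 := ℝ) b
  have hnorm := (summable_nat_add_iff (N + 1)).2 (NormedSpace.norm_expSeries_summable' (𝕂 := ℝ) b)
  have htail : NormedSpace.exp b - ∑ n ∈ Finset.range (N + 1), (n !⁻¹ : ℝ) • b ^ n =
      ∑' n, ((n + (N + 1))!⁻¹ : ℝ) • b ^ (n + (N + 1)) := by
    rw [← hsum.tsum_eq, ← hsum.summable.sum_add_tsum_nat_add (N + 1), add_sub_cancel_left]
  rw [htail]
  refine (norm_tsum_le_tsum_norm hnorm).trans (Summable.tsum_le_tsum (fun n ↦ ?_) hnorm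
    (summable_expTail_terms _ _))
  rw [norm_smul, Real.norm_of_nonneg (by positivity), inv_mul_eq_div]
  gcongr
  exact norm_pow_le' b (Nat.succ_pos _)

end BanachAlgebra

section Hilbert

variable {H : Type*} [NormedAddCommGroup H] [InnerProductSpace ℂ H]

lemma norm_apply_sum_range_smul_pow_apply_le (S C : H →L[ℂ] H) (x : H) {s t : ℝ} (hst : |s| ≤ t)
    (m : ℕ) :
    ‖S ((∑ n ∈ Finset.range (m + 1), (n !⁻¹ : ℝ) • (s • C) ^ n) x)‖ ≤
      Real.exp t * ∑ j ∈ Finset.range (m + 1), ‖S ((C ^ j) x)‖ := by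
  rw [Finset.mul_sum, sum_apply, map_sum]
  refine (norm_sum_le _ _).trans (Finset.sum_le_sum fun n _ ↦ ?_)
  rw [smul_pow, smul_smul, smul_apply, map_smul_of_tower, norm_smul, norm_mul, norm_pow,
    norm_inv, RCLike.norm_natCast, Real.norm_eq_abs, inv_mul_eq_div]
  gcongr
  exact (Real.pow_div_factorial_le_exp _ (abs_nonneg s) n).trans (Real.exp_le_exp.2 hst)

variable [CompleteSpace H]

lemma re_inner_hermitianPart_apply_self (C : H →L[ℂ] H) (y : H) :
    (⟪(((1 : ℂ) / 2) • (C + adjoint C)) y, y⟫_ℂ).re = (⟪C y, y⟫_ℂ).re := by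
  rw [smul_apply, add_apply, inner_smul_left, inner_add_left, adjoint_inner_left,
    ← inner_conj_symm y (C y), Complex.add_conj]
  simp

lemma inner_apply_self_eq_norm_sqrt_apply_sq {T : H →L[ℂ] H} (hT : 0 ≤ T) (y : H) :
    ⟪T y, y⟫_ℂ = ‖CFC.sqrt T y‖ ^ 2 := by
  have hsa : IsSelfAdjoint (CFC.sqrt T) := (CFC.sqrt_nonneg T).isSelfAdjoint
  conv_lhs => rw [← CFC.sqrt_mul_sqrt_self T hT, mul_apply_eq_comp, ← hsa.adjoint_eq,
    adjoint_inner_left, hsa.adjoint_eq]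
  exact inner_self_eq_norm_sq_to_K _

lemma exists_norm_sq_eq_re_inner_of_accretive (C : H →L[ℂ] H)
    (hacc : ∀ x : H, 0 ≤ (⟪C x, x⟫_ℂ).re) :
    ∃ S : H →L[ℂ] H, ∀ y, ‖S y‖ ^ 2 = (⟪C y, y⟫_ℂ).re := by
  set T := ((1 : ℂ) / 2) • (C + adjoint C)
  have hT : 0 ≤ T := by
    rw [nonneg_iff_isPositive, isPositive_def']
    refine ⟨.smul (by simp [IsSelfAdjoint]) (.add_star_self C), fun y ↦ ?_⟩
    rw [reApplyInnerSelf_apply, RCLike.re_to_complex, re_inner_hermitianPart_apply_self]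
    exact hacc y
  refine ⟨CFC.sqrt T, fun y ↦ ?_⟩
  rw [← re_inner_hermitianPart_apply_self, inner_apply_self_eq_norm_sqrt_apply_sq hT]
  norm_cast

lemma inner_sum_adjoint_pow_mul_mul_pow_apply (C T : H →L[ℂ] H) (s : Finset ℕ) (x : H) :
    ⟪(∑ j ∈ s, adjoint C ^ j * T * C ^ j) x, x⟫_ℂ = ∑ j ∈ s, ⟪T ((C ^ j) x), (C ^ j) x⟫_ℂ := by
  rw [sum_apply, sum_inner]
  refine Finset.sum_congr rfl fun j _ ↦ ?_
  rw [← star_eq_adjoint, ← star_pow, star_eq_adjoint, mul_apply_eq_comp, mul_apply_eq_comp,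
    adjoint_inner_left]

lemma hasDerivAt_exp_smul_neg_apply (C : H →L[ℂ] H) (x : H) (s : ℝ) :
    HasDerivAt (fun r : ℝ ↦ NormedSpace.exp (r • -C) x) (-C (NormedSpace.exp (s • -C) x)) s := by
  simpa [Function.comp_def, mul_apply_eq_comp] using
    ((apply ℂ H x).restrictScalars ℝ).hasFDerivAt.comp_hasDerivAt s
      (hasDerivAt_exp_smul_const' (𝕂 := ℝ) (-C) s)

lemma hasDerivAt_norm_sq_exp_smul_neg_apply (C : H →L[ℂ] H) (x : H) (s : ℝ) :
    HasDerivAt (fun r : ℝ ↦ ‖NormedSpace.exp (r • -C) x‖ ^ 2)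
      (-(2 * (⟪C (NormedSpace.exp (s • -C) x), NormedSpace.exp (s • -C) x⟫_ℂ).re)) s := by
  let := InnerProductSpace.rclikeToReal ℂ H
  convert (hasDerivAt_exp_smul_neg_apply C x s).norm_sq using 1
  rw [real_inner_eq_re_inner, inner_neg_right, map_neg, inner_re_symm, RCLike.re_to_complex]
  ring

lemma norm_sq_sub_norm_sq_exp_smul_neg_apply_le (C : H →L[ℂ] H) (x : H) {t K : ℝ} (ht : 0 ≤ t)
    (hK : ∀ s ∈ Set.Icc 0 t,
      (⟪C (NormedSpace.exp (s • -C) x), NormedSpace.exp (s • -C) x⟫_ℂ).re ≤ K) :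
    ‖x‖ ^ 2 - ‖NormedSpace.exp (t • -C) x‖ ^ 2 ≤ 2 * K * t := by
  have hderiv := hasDerivAt_norm_sq_exp_smul_neg_apply C x
  have hmvt := (convex_Icc 0 t).mul_sub_le_image_sub_of_le_deriv
    (fun s _ ↦ (hderiv s).continuousAt.continuousWithinAt)
    (fun s _ ↦ (hderiv s).differentiableAt.differentiableWithinAt) (C := -(2 * K))
    (fun s hs ↦ by
      rw [interior_Icc] at hs
      rw [(hderiv s).deriv]
      linarith [hK s (Set.Ioo_subset_Icc_self hs)])
    0 ⟨le_rfl, ht⟩ t ⟨ht, le_rfl⟩ ht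
  simp only [zero_smul, NormedSpace.exp_zero, one_apply_eq_self] at hmvt
  linarith

lemma norm_apply_exp_smul_neg_apply_sq_le (S C : H →L[ℂ] H) (x : H) {s t : ℝ}
    (hs : 0 ≤ s) (hst : s ≤ t) (m : ℕ) :
    ‖S (NormedSpace.exp (s • -C) x)‖ ^ 2 ≤
      2 * (m + 1) * Real.exp t ^ 2 * ∑ j ∈ Finset.range (m + 1), ‖S ((C ^ j) x)‖ ^ 2 +
        2 * (‖S‖ * expTail (t * ‖C‖) (m + 1)) ^ 2 * ‖x‖ ^ 2 := by
  rw [smul_neg, ← neg_smul]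
  set p := ∑ n ∈ Finset.range (m + 1), (n !⁻¹ : ℝ) • ((-s) • C) ^ n
  have hp := norm_apply_sum_range_smul_pow_apply_le S C x (s := -s) (t := t)
    (by rwa [abs_neg, abs_of_nonneg hs]) m
  have hrem : ‖S ((NormedSpace.exp ((-s) • C) - p) x)‖ ≤
      ‖S‖ * expTail (t * ‖C‖) (m + 1) * ‖x‖ := by
    have hb : ‖(-s) • C‖ ≤ t * ‖C‖ := by
      rw [norm_smul, Real.norm_eq_abs, abs_neg, abs_of_nonneg hs]
      gcongr
    calc ‖S ((NormedSpace.exp ((-s) • C) - p) x)‖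
        ≤ ‖S‖ * (‖NormedSpace.exp ((-s) • C) - p‖ * ‖x‖) :=
          (S.le_opNorm _).trans (by gcongr; exact le_opNorm _ _)
      _ ≤ ‖S‖ * (expTail (t * ‖C‖) (m + 1) * ‖x‖) := by
          gcongr
          exact (norm_exp_sub_sum_range_le _ m).trans (expTail_mono (norm_nonneg _) hb _)
      _ = _ := by ring
  have hsplit : S (NormedSpace.exp ((-s) • C) x) =
      S (p x) + S ((NormedSpace.exp ((-s) • C) - p) x) := by
    rw [← map_add, sub_apply, add_sub_cancel]
  have hcard : (∑ j ∈ Finset.range (m + 1), ‖S ((C ^ j) x)‖) ^ 2 ≤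
      (m + 1) * ∑ j ∈ Finset.range (m + 1), ‖S ((C ^ j) x)‖ ^ 2 := by
    simpa using sq_sum_le_card_mul_sum_sq (s := Finset.range (m + 1))
      (f := fun j ↦ ‖S ((C ^ j) x)‖)
  calc ‖S (NormedSpace.exp ((-s) • C) x)‖ ^ 2
      ≤ (Real.exp t * ∑ j ∈ Finset.range (m + 1), ‖S ((C ^ j) x)‖ +
          ‖S‖ * expTail (t * ‖C‖) (m + 1) * ‖x‖) ^ 2 := by
        rw [hsplit]
        gcongr
        exact (norm_add_le _ _).trans (add_le_add hp hrem)
    _ ≤ 2 * (Real.exp t * ∑ j ∈ Finset.range (m + 1), ‖S ((C ^ j) x)‖) ^ 2 +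
          2 * (‖S‖ * expTail (t * ‖C‖) (m + 1) * ‖x‖) ^ 2 :=
        add_sq_le.trans_eq (mul_add _ _ _)
    _ ≤ _ := by
        have := mul_le_mul_of_nonneg_left hcard (sq_nonneg (Real.exp t))
        rw [mul_pow, mul_pow _ ‖x‖]
        linarith

lemma norm_sq_sub_norm_sq_exp_smul_neg_apply_le_sum (S C : H →L[ℂ] H)
    (hS : ∀ y, ‖S y‖ ^ 2 = (⟪C y, y⟫_ℂ).re) (x : H) {t : ℝ} (ht : 0 ≤ t) (m : ℕ) :
    ‖x‖ ^ 2 - ‖NormedSpace.exp (t • -C) x‖ ^ 2 ≤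
      4 * t * (m + 1) * Real.exp t ^ 2 * ∑ j ∈ Finset.range (m + 1), ‖S ((C ^ j) x)‖ ^ 2 +
        4 * t * (‖S‖ * expTail (t * ‖C‖) (m + 1)) ^ 2 * ‖x‖ ^ 2 :=
  (norm_sq_sub_norm_sq_exp_smul_neg_apply_le C x ht fun s hs ↦
    (hS _).symm.trans_le (norm_apply_exp_smul_neg_apply_sq_le S C x hs.1 hs.2 m)).trans_eq
    (by ring)

end Hilbert

theorem finite_hypocoercivity_index_of_contractive_general
    {H : Type*} [NormedAddCommGroup H] [InnerProductSpace ℂ H]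
    [CompleteSpace H]
    (C : H →L[ℂ] H)
    (hacc : ∀ x : H, 0 ≤ (⟪C x, x⟫_ℂ).re)
    (t₀ : ℝ) (ht₀ : 0 < t₀)
    (hP : ‖NormedSpace.exp (-((t₀ : ℂ) • C))‖ < 1) :
    ∃ (m : ℕ) (κ : ℝ), 0 < κ ∧ ∀ x : H,
      κ * ‖x‖ ^ 2 ≤ (⟪(∑ j ∈ Finset.range (m + 1),
        (ContinuousLinearMap.adjoint C) ^ j *
          (((1 : ℂ) / 2) • (C + ContinuousLinearMap.adjoint C)) * C ^ j) x, x⟫_ℂ).re := by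
  obtain ⟨S, hS⟩ := exists_norm_sq_eq_re_inner_of_accretive C hacc
  rw [Complex.coe_smul, ← smul_neg] at hP
  set P := NormedSpace.exp (t₀ • -C)
  set δ := 1 - ‖P‖ ^ 2
  have hδ : 0 < δ := by nlinarith [norm_nonneg P]
  obtain ⟨m, hm⟩ : ∃ m : ℕ, 4 * t₀ * (‖S‖ * expTail (t₀ * ‖C‖) (m + 1)) ^ 2 ≤ δ / 2 := by
    have hlim : Tendsto (fun m : ℕ ↦ 4 * t₀ * (‖S‖ * expTail (t₀ * ‖C‖) (m + 1)) ^ 2)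
        atTop (𝓝 0) := by
      have htail := (tendsto_expTail (t₀ * ‖C‖)).comp (tendsto_add_atTop_nat 1)
      simpa using ((htail.const_mul ‖S‖).pow 2).const_mul (4 * t₀)
    exact (hlim.eventually_le_const (half_pos hδ)).exists
  refine ⟨m, δ / 2 / (4 * t₀ * (m + 1) * Real.exp t₀ ^ 2), by positivity, fun x ↦ ?_⟩
  rw [inner_sum_adjoint_pow_mul_mul_pow_apply, Complex.re_sum]
  simp_rw [re_inner_hermitianPart_apply_self, ← hS]
  have hPx : ‖P x‖ ^ 2 ≤ ‖P‖ ^ 2 * ‖x‖ ^ 2 := by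
    rw [← mul_pow]; gcongr; exact P.le_opNorm x
  have hest := norm_sq_sub_norm_sq_exp_smul_neg_apply_le_sum S C hS x ht₀.le m
  rw [div_mul_eq_mul_div, div_le_iff₀ (by positivity)]
  nlinarith [mul_le_mul_of_nonneg_right hm (sq_nonneg ‖x‖)]

/-- if `C` is accretive and `‖e^{-C t₀}‖ < 1` for some `t₀ > 0`, then `C` has a
finite hypocoercivity index: `∑_{j=0}^m (C*)^j C_H C^j ≥ κ I` for some `m` and `κ > 0`. -/
theorem finite_hypocoercivity_index_of_contractive
    {H : Type*} [NormedAddCommGroup H] [InnerProductSpace ℂ H]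
    [CompleteSpace H] [TopologicalSpace.SeparableSpace H]
    (C : H →L[ℂ] H)
    (hacc : ∀ x : H, 0 ≤ (⟪C x, x⟫_ℂ).re)
    (t₀ : ℝ) (ht₀ : 0 < t₀)
    (hP : ‖NormedSpace.exp (-((t₀ : ℂ) • C))‖ < 1) :
    ∃ (m : ℕ) (κ : ℝ), 0 < κ ∧ ∀ x : H,
      κ * ‖x‖ ^ 2 ≤ (⟪(∑ j ∈ Finset.range (m + 1),
        (ContinuousLinearMap.adjoint C) ^ j *
          (((1 : ℂ) / 2) • (C + ContinuousLinearMap.adjoint C)) * C ^ j) x, x⟫_ℂ).re :=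
  finite_hypocoercivity_index_of_contractive_general C hacc t₀ ht₀ hP
end

section
/- Let H be a Hilbert space with orthonormal basis (φ_j)_{j∈ℤ}, let R be the operator with R φ_j = (1 − δ_{j,0}) φ_j, and let T be the self-adjoint operator with matrix entries ⟨T φ_j, φ_k⟩ = ½δ_{j,k} + ¼(δ_{j-k,2} + δ_{j-k,-2}) − ¼(δ_{j,1}+δ_{j,-1})(δ_{k,1}+δ_{k,-1}). Then R + T ≥ κ I with κ = (3 − √5)/2. -/
/-!
In the coordinates `c_j = ⟪φ_j, x⟫`, the form `⟪(R + T) x, x⟫` is the banded form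
`∑ d_j |c_j|² + ½ ∑ Re(c̄_j c_{j+2}) - ¼ |c_1 + c_{-1}|²` with `d_0 = ½` and `d_j = 3/2`
otherwise, so even and odd modes decouple. Write the form minus `κ ∑ |c_j|²` as a sum over the edges
`(j, j + 2)` of the nonnegative forms `A_j |c_j|² + B_j |c_{j+2}|² + ½ Re(c̄_j c_{j+2})`
(`16 A_j B_j ≥ 1`) plus a nonnegative diagonal remainder. On odd edges `A = B = ¼`, and the edge
`(-1, 1)` is exactly the rank-one term `¼ |c_1 + c_{-1}|²`. On even edges the weights are
`(√5 ∓ 2)/4`, the smaller one on the site nearer to `0`; they exhaust the diagonal at every even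
site, and equality holds for `c_{2m} = (2 - √5)^|m|`, `c_{2m+1} = 0`.
-/

open scoped InnerProductSpace ComplexConjugate

namespace HilbertBasis

variable {ι 𝕜 E F : Type*} [RCLike 𝕜] [NormedAddCommGroup E] [InnerProductSpace 𝕜 E]
  [NormedAddCommGroup F] [InnerProductSpace 𝕜 F] (b : HilbertBasis ι 𝕜 E)

theorem hasSum_norm_inner_sq (x : E) :
    HasSum (fun i => ‖⟪b i, x⟫_𝕜‖ ^ 2) (‖x‖ ^ 2) := by
  convert RCLike.hasSum_re 𝕜 (b.hasSum_inner_mul_inner x x) using 1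
  · ext i
    rw [← inner_conj_symm x (b i), RCLike.conj_mul, ← RCLike.ofReal_pow, RCLike.ofReal_re]
  · exact (inner_self_eq_norm_sq x).symm

theorem hasSum_inner_apply (S : E →L[𝕜] F) (x : E) (y : F) :
    HasSum (fun i => ⟪b i, x⟫_𝕜 * ⟪y, S (b i)⟫_𝕜) ⟪y, S x⟫_𝕜 := by
  simpa [b.repr_apply_apply] using (b.hasSum_repr x).mapL ((innerSL 𝕜 y).comp S)

theorem inner_apply_of_apply_eq_ite [DecidableEq ι] {R : E →L[𝕜] E} {i₀ : ι}
    (hR : ∀ i, R (b i) = if i = i₀ then 0 else b i) (x : E) (j : ι) :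
    ⟪b j, R x⟫_𝕜 = if j = i₀ then 0 else ⟪b j, x⟫_𝕜 := by
  refine (b.hasSum_inner_apply R x (b j)).unique ((hasSum_ite_eq j _).congr_fun fun k => ?_)
  rw [hR k, apply_ite (inner 𝕜 (b j)), inner_zero_right, orthonormal_iff_ite.mp b.orthonormal]
  split_ifs <;> subst_vars <;> simp_all

end HilbertBasis

theorem hasSum_mul_ite_eq {ι α : Type*} [NonUnitalNonAssocSemiring α] [TopologicalSpace α]
    [DecidableEq ι] (c : ι → α) (a : ι) (r : α) :
    HasSum (fun k => c k * if k = a then r else 0) (c a * r) := by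
  simpa using hasSum_single a (f := fun k => c k * if k = a then r else 0) fun k hk => by simp [hk]

section BandedForm

variable {c : ℤ → ℂ}

theorem summable_re_conj_mul_shift (hc : Summable fun j => ‖c j‖ ^ 2) (k : ℤ) :
    Summable fun j => (conj (c j) * c (j + k)).re := by
  have hck : Summable fun j => ‖c (j + k)‖ ^ 2 :=
    (Equiv.addRight k).summable_iff.mpr hc
  refine ((hc.add hck).div_const 2).of_norm_bounded fun j => ?_
  calc ‖(conj (c j) * c (j + k)).re‖ ≤ ‖c j‖ * ‖c (j + k)‖ := by
        simpa using Complex.abs_re_le_norm (conj (c j) * c (j + k))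
    _ ≤ _ := by nlinarith [sq_nonneg (‖c j‖ - ‖c (j + k)‖)]

theorem binary_form_nonneg {A B e : ℝ} (hA : 0 ≤ A) (hB : 0 ≤ B) (hAB : e ^ 2 ≤ 4 * A * B)
    (u v : ℂ) : 0 ≤ A * ‖u‖ ^ 2 + B * ‖v‖ ^ 2 + e * (conj u * v).re := by
  have hre : |e * (conj u * v).re| ≤ |e| * (‖u‖ * ‖v‖) := by
    rw [abs_mul]
    gcongr
    simpa using Complex.abs_re_le_norm (conj u * v)
  have hamgm : |e| * (‖u‖ * ‖v‖) ≤ A * ‖u‖ ^ 2 + B * ‖v‖ ^ 2 := by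
    rcases hA.eq_or_lt with rfl | hA
    · have : e = 0 := by nlinarith [sq_nonneg e]
      simp only [this, abs_zero, zero_mul, zero_add]
      positivity
    · have h := sq_abs e
      nlinarith [sq_nonneg (2 * A * ‖u‖ - |e| * ‖v‖), norm_nonneg v, abs_nonneg e,
        mul_nonneg (sub_nonneg.mpr hAB) (sq_nonneg ‖v‖)]
  linarith [neg_abs_le (e * (conj u * v).re)]

/-- The banded form is the sum of the edge forms plus a nonnegative diagonal remainder, because
the shift `j ↦ j + k` moves the term `B j * ‖c (j + k)‖ ^ 2` to the site `j + k`. -/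
theorem edge_form_le_of_hasSum (hc : Summable fun j => ‖c j‖ ^ 2) {k : ℤ} {e C s : ℝ}
    {d A B : ℤ → ℝ} (hA : ∀ j, 0 ≤ A j) (hB : ∀ j, 0 ≤ B j)
    (hAB : ∀ j, e ^ 2 ≤ 4 * A j * B j)
    (hd : ∀ j, A j + B (j - k) ≤ d j) (hdC : ∀ j, d j ≤ C)
    (hs : HasSum (fun j => d j * ‖c j‖ ^ 2 + e * (conj (c j) * c (j + k)).re) s) (i : ℤ) :
    A i * ‖c i‖ ^ 2 + B i * ‖c (i + k)‖ ^ 2 + e * (conj (c i) * c (i + k)).re ≤ s := by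
  have hslack : ∀ j, 0 ≤ (d j - A j - B (j - k)) * ‖c j‖ ^ 2 := fun j =>
    mul_nonneg (by linarith [hd j]) (sq_nonneg _)
  obtain ⟨β, hβ⟩ : Summable fun j => B (j - k) * ‖c j‖ ^ 2 :=
    (hc.mul_left C).of_nonneg_of_le (fun j => mul_nonneg (hB _) (sq_nonneg _))
      fun j => mul_le_mul_of_nonneg_right (by linarith [hd j, hdC j, hA j]) (sq_nonneg _)
  have hβ_shift : HasSum (fun j => B j * ‖c (j + k)‖ ^ 2) β := by
    convert (Equiv.addRight k).hasSum_iff.mpr hβ using 2 with j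
    simp
  have hsplit : HasSum (fun j => (A j * ‖c j‖ ^ 2 + B j * ‖c (j + k)‖ ^ 2
      + e * (conj (c j) * c (j + k)).re) + (d j - A j - B (j - k)) * ‖c j‖ ^ 2) s := by
    have h := (hs.add hβ_shift).sub hβ
    rw [add_sub_cancel_right] at h
    exact h.congr_fun fun j => by ring
  refine (le_add_of_nonneg_right (hslack i)).trans (le_hasSum hsplit i fun j _ => ?_)
  exact add_nonneg (binary_form_nonneg (hA j) (hB j) (hAB j) _ _) (hslack j)

end BandedForm

/-- `A_j = lorentzPairWeight j` and `B_j = lorentzPairWeight (-j - 2)` are the edge weights of the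
header; `j % 2 = 1` tests oddness, as `%` on `ℤ` is nonnegative. -/
noncomputable def lorentzPairWeight (j : ℤ) : ℝ :=
  if j % 2 = 1 then 1 / 4 else if 0 ≤ j then (√5 - 2) / 4 else (√5 + 2) / 4

theorem sqrt_five_bounds : 2 < √5 ∧ √5 < 3 ∧ √5 ^ 2 = 5 := by
  have h := Real.sq_sqrt (show (0 : ℝ) ≤ 5 by norm_num)
  refine ⟨?_, ?_, h⟩ <;> nlinarith [Real.sqrt_nonneg 5]

theorem lorentzPairWeight_nonneg (j : ℤ) : 0 ≤ lorentzPairWeight j := by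
  obtain ⟨h2, -, -⟩ := sqrt_five_bounds
  unfold lorentzPairWeight
  split_ifs <;> linarith

theorem sq_le_four_mul_lorentzPairWeight (j : ℤ) :
    (1 / 2 : ℝ) ^ 2 ≤ 4 * lorentzPairWeight j * lorentzPairWeight (-j - 2) := by
  obtain ⟨-, -, h5⟩ := sqrt_five_bounds
  unfold lorentzPairWeight
  split_ifs <;> first | (exfalso; omega) | nlinarith

theorem lorentzPairWeight_add_le (j : ℤ) :
    lorentzPairWeight j + lorentzPairWeight (-(j - 2) - 2)
      ≤ (if j = 0 then 1 / 2 else 3 / 2) - (3 - √5) / 2 := by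
  obtain ⟨h2, -, -⟩ := sqrt_five_bounds
  unfold lorentzPairWeight
  split_ifs <;> first | (exfalso; omega) | linarith

/-- The matrix of `R + T` acting on coordinates: `⟪φ_j, (R + T) x⟫ = lorentzAction c j`. -/
noncomputable def lorentzAction (c : ℤ → ℂ) (j : ℤ) : ℂ :=
  (if j = 0 then 0 else c j) + (c j / 2 + (c (j - 2) + c (j + 2)) / 4
    - ((if j = 1 then 1 else 0) + (if j = -1 then 1 else 0)) * (c 1 + c (-1)) / 4)

/-- The second and third terms on the left sum to `¼ |c_1 + c_{-1}|²` and to `0` over `j`. -/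
theorem re_conj_lorentzAction_mul (c : ℤ → ℂ) (j : ℤ) :
    (conj (lorentzAction c j) * c j).re
      + (conj (c 1 + c (-1))
          * ((if j = 1 then c 1 else 0) + (if j = -1 then c (-1) else 0))).re / 4
      + ((conj (c j) * c (j + 2)).re - (conj (c (j - 2)) * c (j - 2 + 2)).re) / 4
    = (if j = 0 then 1 / 2 else 3 / 2) * ‖c j‖ ^ 2 + 1 / 2 * (conj (c j) * c (j + 2)).re := by
  rw [sub_add_cancel, Complex.sq_norm, Complex.normSq_apply]
  unfold lorentzAction
  split_ifs <;> first
    | (exfalso; omega)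
    | (subst_vars; simp [Complex.mul_re, map_div₀, map_ofNat]; ring)

theorem lorentzAction_coercive (c : ℤ → ℂ) {N Q : ℝ}
    (hN : HasSum (fun j => ‖c j‖ ^ 2) N)
    (hQ : HasSum (fun j => (conj (lorentzAction c j) * c j).re) Q) : (3 - √5) / 2 * N ≤ Q := by
  obtain ⟨-, h3, -⟩ := sqrt_five_bounds
  have hX := (summable_re_conj_mul_shift hN.summable 2).hasSum
  have hX_shift : HasSum (fun j => (conj (c (j - 2)) * c (j - 2 + 2)).re) _ :=
    (Equiv.subRight (2 : ℤ)).hasSum_iff.mpr hX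
  have hρ := (Complex.hasSum_re (((hasSum_ite_eq 1 (c 1)).add
    (hasSum_ite_eq (-1) (c (-1)))).mul_left (conj (c 1 + c (-1))))).div_const 4
  have hs : HasSum (fun j => ((if j = 0 then 1 / 2 else 3 / 2) - (3 - √5) / 2) * ‖c j‖ ^ 2
      + 1 / 2 * (conj (c j) * c (j + 2)).re)
      (Q + (conj (c 1 + c (-1)) * (c 1 + c (-1))).re / 4 - (3 - √5) / 2 * N) := by
    have h := ((hQ.add hρ).add ((hX.sub hX_shift).div_const 4)).sub (hN.mul_left ((3 - √5) / 2))
    rw [sub_self, zero_div, add_zero] at h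
    exact h.congr_fun fun j => by linarith [re_conj_lorentzAction_mul c j]
  have hedge := edge_form_le_of_hasSum hN.summable lorentzPairWeight_nonneg
    (fun j => lorentzPairWeight_nonneg (-j - 2)) sq_le_four_mul_lorentzPairWeight
    lorentzPairWeight_add_le (C := 3 / 2) (fun j => by split_ifs <;> linarith) hs (-1)
  have hw : lorentzPairWeight (-1) = 1 / 4 := by norm_num [lorentzPairWeight]
  have hρ_val : (conj (c 1 + c (-1)) * (c 1 + c (-1))).re
      = ‖c (-1)‖ ^ 2 + ‖c 1‖ ^ 2 + 2 * (conj (c (-1)) * c 1).re := by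
    simp only [Complex.sq_norm, Complex.normSq_apply, map_add, Complex.mul_re, Complex.add_re,
      Complex.add_im, Complex.conj_re, Complex.conj_im]
    ring
  rw [show (- -1 - 2 : ℤ) = -1 by norm_num, show (-1 + 2 : ℤ) = 1 by norm_num, hw] at hedge
  linarith

theorem inner_basis_apply_of_inner_apply_basis {H : Type*} [NormedAddCommGroup H]
    [InnerProductSpace ℂ H] {φ : HilbertBasis ℤ ℂ H} {T : H →L[ℂ] H}
    (hTent : ∀ j k : ℤ, ⟪T (φ j), φ k⟫_ℂ =
        (1 / 2 : ℂ) * (if j = k then 1 else 0)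
        + (1 / 4 : ℂ) * ((if j - k = 2 then 1 else 0) + (if j - k = -2 then 1 else 0))
        - (1 / 4 : ℂ) * ((if j = 1 then 1 else 0) + (if j = -1 then 1 else 0))
            * ((if k = 1 then 1 else 0) + (if k = -1 then 1 else 0))) (x : H) (j : ℤ) :
    ⟪φ j, T x⟫_ℂ = ⟪φ j, x⟫_ℂ / 2 + (⟪φ (j - 2), x⟫_ℂ + ⟪φ (j + 2), x⟫_ℂ) / 4
      - ((if j = 1 then 1 else 0) + (if j = -1 then 1 else 0))
        * (⟪φ 1, x⟫_ℂ + ⟪φ (-1), x⟫_ℂ) / 4 := by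
  set c : ℤ → ℂ := fun k => ⟪φ k, x⟫_ℂ
  set w : ℂ := ((if j = 1 then 1 else 0) + (if j = -1 then 1 else 0)) / 4
  have hentry : ∀ k, ⟪φ j, T (φ k)⟫_ℂ = (if k = j then 1 / 2 else 0)
      + (if k = j - 2 then 1 / 4 else 0) + (if k = j + 2 then 1 / 4 else 0)
      - (if k = 1 then w else 0) - (if k = -1 then w else 0) := by
    intro k
    rw [← inner_conj_symm (φ j) (T (φ k)), hTent k j]
    simp only [w]
    split_ifs <;> first | (exfalso; omega) | norm_num [map_ofNat]
  have hsum := ((((hasSum_mul_ite_eq c j (1 / 2)).add (hasSum_mul_ite_eq c (j - 2) (1 / 4))).add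
    (hasSum_mul_ite_eq c (j + 2) (1 / 4))).sub (hasSum_mul_ite_eq c 1 w)).sub
    (hasSum_mul_ite_eq c (-1) w)
  simp only [← mul_add, ← mul_sub, ← hentry] at hsum
  refine ((φ.hasSum_inner_apply T x (φ j)).unique hsum).trans ?_
  simp only [c, w]
  ring

theorem lorentz_mode_coercivity_general
    {H : Type*} [NormedAddCommGroup H] [InnerProductSpace ℂ H]
    (φ : HilbertBasis ℤ ℂ H) (R T : H →L[ℂ] H)
    (hR : ∀ j : ℤ, R (φ j) = if j = 0 then 0 else φ j)
    (hTent : ∀ j k : ℤ, ⟪T (φ j), φ k⟫_ℂ =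
        (1 / 2 : ℂ) * (if j = k then 1 else 0)
        + (1 / 4 : ℂ) * ((if j - k = 2 then 1 else 0) + (if j - k = -2 then 1 else 0))
        - (1 / 4 : ℂ) * ((if j = 1 then 1 else 0) + (if j = -1 then 1 else 0))
            * ((if k = 1 then 1 else 0) + (if k = -1 then 1 else 0))) :
    ∀ x : H, ((3 - Real.sqrt 5) / 2) * ‖x‖ ^ 2 ≤ (⟪(R + T) x, x⟫_ℂ).re := by
  intro x
  set c : ℤ → ℂ := fun j => ⟪φ j, x⟫_ℂ
  have hcoord : ∀ j, ⟪φ j, (R + T) x⟫_ℂ = lorentzAction c j := fun j => by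
    rw [add_apply, inner_add_right, φ.inner_apply_of_apply_eq_ite hR,
      inner_basis_apply_of_inner_apply_basis hTent]
    rfl
  have hQ : HasSum (fun j => (conj (lorentzAction c j) * c j).re) (⟪(R + T) x, x⟫_ℂ).re := by
    refine (Complex.hasSum_re (φ.hasSum_inner_mul_inner ((R + T) x) x)).congr_fun fun j => ?_
    rw [← hcoord, inner_conj_symm]
  exact lorentzAction_coercive c (φ.hasSum_norm_inner_sq x) hQ

/-- on `ℓ²(ℤ)` with orthonormal basis `(φ_j)`, with `R φ_j = (1 − δ_{j0}) φ_j`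
and `T` self-adjoint with the given matrix entries, one has `R + T ≥ κ I` with
`κ = (3 − √5)/2`. -/
theorem lorentz_mode_coercivity
    {H : Type*} [NormedAddCommGroup H] [InnerProductSpace ℂ H] [CompleteSpace H]
    (φ : HilbertBasis ℤ ℂ H) (R T : H →L[ℂ] H)
    (hT : IsSelfAdjoint T)
    (hR : ∀ j : ℤ, R (φ j) = if j = 0 then 0 else φ j)
    (hTent : ∀ j k : ℤ, ⟪T (φ j), φ k⟫_ℂ =
        (1 / 2 : ℂ) * (if j = k then 1 else 0)
        + (1 / 4 : ℂ) * ((if j - k = 2 then 1 else 0) + (if j - k = -2 then 1 else 0))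
        - (1 / 4 : ℂ) * ((if j = 1 then 1 else 0) + (if j = -1 then 1 else 0))
            * ((if k = 1 then 1 else 0) + (if k = -1 then 1 else 0))) :
    ∀ x : H, ((3 - Real.sqrt 5) / 2) * ‖x‖ ^ 2 ≤ (⟪(R + T) x, x⟫_ℂ).re :=
  lorentz_mode_coercivity_general φ R T hR hTent
end
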